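/- arXiv:1810.11680 — 9 statements merged into one kernel-verified Lean document; each statement's English description precedes it below -/
import Mathlib

section
/- For every n ≥ 1 and every n×n complex matrix A, the numerical range W(A) is a convex subset of ℂ. -/
/-!
Normalise two points of the numerical range to `0 = ⟪v, T v⟫` and `1 = ⟪u, T u⟫` by an affine change
`T ↦ a • T + b • id`. After multiplying `u` by a unimodular scalar, the cross term
`⟪u, T v⟫ + ⟪v, T u⟫` is real, so along the path `w s = s • u + (1 - s) • v` the Rayleigh quotient
`⟪w s, T (w s)⟫ / ‖w s‖ ^ 2` is real-valued and continuous, runs from `0` to `1`, and by the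
intermediate value theorem takes every value in `[0, 1]`.
-/

/-- The numerical range of an `n × n` complex matrix `A`:
`W(A) = {⟨A x, x⟩ : x ∈ ℂⁿ, ‖x‖ = 1}` (written with Mathlib's inner product, which is
conjugate-linear in the first argument, as `⟪x, A x⟫`). -/
noncomputable def numRange {n : ℕ} (A : Matrix (Fin n) (Fin n) ℂ) : Set ℂ :=
  {z : ℂ | ∃ x : EuclideanSpace ℂ (Fin n), ‖x‖ = 1 ∧
    z = (inner ℂ x (Matrix.toEuclideanLin A x) : ℂ)}

open scoped InnerProductSpace ComplexConjugate

theorem Complex.exists_norm_eq_one_conj_mul_eq_norm (c : ℂ) :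
    ∃ μ : ℂ, ‖μ‖ = 1 ∧ conj μ * c = ‖c‖ := by
  refine ⟨Complex.exp (c.arg * Complex.I), Complex.norm_exp_ofReal_mul_I _, ?_⟩
  conv_lhs => rw [← Complex.norm_mul_exp_arg_mul_I c]
  rw [← Complex.exp_conj, map_mul, Complex.conj_ofReal, Complex.conj_I, mul_left_comm,
    ← Complex.exp_add]
  simp

namespace LinearMap

variable {E : Type*} [NormedAddCommGroup E] [InnerProductSpace ℂ E] (T : E →ₗ[ℂ] E)

def numericalRange : Set ℂ := {z | ∃ x : E, ‖x‖ = 1 ∧ z = ⟪x, T x⟫_ℂ}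

theorem inner_map_self_smul (c : ℂ) (x : E) :
    ⟪c • x, T (c • x)⟫_ℂ = (‖c‖ ^ 2 : ℂ) * ⟪x, T x⟫_ℂ := by
  rw [map_smul, inner_smul_left, inner_smul_right, ← mul_assoc, Complex.conj_mul']

theorem inner_map_self_ofReal_smul_add (a b : ℝ) (x y : E) :
    ⟪(a : ℂ) • x + (b : ℂ) • y, T ((a : ℂ) • x + (b : ℂ) • y)⟫_ℂ =
      a ^ 2 * ⟪x, T x⟫_ℂ + a * b * (⟪x, T y⟫_ℂ + ⟪y, T x⟫_ℂ) + b ^ 2 * ⟪y, T y⟫_ℂ := by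
  simp only [map_add, map_smul, inner_add_left, inner_add_right, inner_smul_left,
    inner_smul_right, Complex.conj_ofReal]
  ring

theorem div_norm_sq_mem_numericalRange {x : E} (hx : x ≠ 0) :
    ⟪x, T x⟫_ℂ / (‖x‖ ^ 2 : ℂ) ∈ T.numericalRange := by
  have hx' : ‖x‖ ≠ 0 := norm_ne_zero_iff.2 hx
  refine ⟨((‖x‖⁻¹ : ℝ) : ℂ) • x, ?_, ?_⟩
  · rw [norm_smul, Complex.norm_real, Real.norm_eq_abs, abs_inv, abs_norm, inv_mul_cancel₀ hx']
  · rw [inner_map_self_smul, Complex.norm_real, Real.norm_eq_abs, abs_inv, abs_norm]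
    push_cast
    field_simp

theorem inner_smul_add_smul_id_self {x : E} (hx : ‖x‖ = 1) (a b : ℂ) :
    ⟪x, (a • T + b • LinearMap.id : E →ₗ[ℂ] E) x⟫_ℂ = a * ⟪x, T x⟫_ℂ + b := by
  simp [inner_self_eq_norm_sq_to_K, hx]

theorem numericalRange_smul_add_smul_id (a b : ℂ) :
    (a • T + b • LinearMap.id : E →ₗ[ℂ] E).numericalRange =
      (fun z => a * z + b) '' T.numericalRange := by
  ext z
  constructor
  · rintro ⟨x, hx, rfl⟩
    exact ⟨_, ⟨x, hx, rfl⟩, (T.inner_smul_add_smul_id_self hx a b).symm⟩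
  · rintro ⟨_, ⟨x, hx, rfl⟩, rfl⟩
    exact ⟨x, hx, (T.inner_smul_add_smul_id_self hx a b).symm⟩

theorem exists_norm_eq_one_im_cross_term_eq_zero (u v : E) :
    ∃ μ : ℂ, ‖μ‖ = 1 ∧ (⟪μ • u, T v⟫_ℂ + ⟪v, T (μ • u)⟫_ℂ).im = 0 := by
  obtain ⟨μ, hμ, hc⟩ :=
    Complex.exists_norm_eq_one_conj_mul_eq_norm (⟪u, T v⟫_ℂ - conj ⟪v, T u⟫_ℂ)
  refine ⟨μ, hμ, ?_⟩
  have : ⟪μ • u, T v⟫_ℂ + ⟪v, T (μ • u)⟫_ℂ =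
      conj μ * (⟪u, T v⟫_ℂ - conj ⟪v, T u⟫_ℂ) + (μ * ⟪v, T u⟫_ℂ + conj (μ * ⟪v, T u⟫_ℂ)) := by
    rw [map_smul, inner_smul_left, inner_smul_right, map_mul]
    ring
  rw [this, Complex.add_im, hc, Complex.add_conj]
  simp

theorem ofReal_smul_add_ofReal_one_sub_smul_ne_zero {u v : E} (hv : v ≠ 0)
    (hTu : ⟪u, T u⟫_ℂ ≠ 0) (hTv : ⟪v, T v⟫_ℂ = 0) (s : ℝ) :
    (s : ℂ) • u + ((1 - s : ℝ) : ℂ) • v ≠ 0 := by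
  intro h
  have hsv : (s : ℂ) • u = ((s - 1 : ℝ) : ℂ) • v := by
    rw [eq_neg_of_add_eq_zero_left h, ← neg_smul]
    congr 1
    push_cast
    ring
  have hs : s = 0 := by
    have := congrArg (fun x => ⟪x, T x⟫_ℂ) hsv
    simpa [inner_map_self_smul, hTu, hTv] using this
  simp [hs, hv] at h

theorem ofReal_mem_numericalRange_of_zero_mem_of_one_mem (h₀ : 0 ∈ T.numericalRange)
    (h₁ : 1 ∈ T.numericalRange) {t : ℝ} (ht : t ∈ Set.Icc 0 1) :
    (t : ℂ) ∈ T.numericalRange := by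
  obtain ⟨v, hv, hTv⟩ := h₀
  obtain ⟨u₀, hu₀, hTu₀⟩ := h₁
  obtain ⟨μ, hμ, hcross⟩ := T.exists_norm_eq_one_im_cross_term_eq_zero u₀ v
  set u := μ • u₀
  have hu : ‖u‖ = 1 := by rw [norm_smul, hμ, hu₀, one_mul]
  have hTu : ⟪u, T u⟫_ℂ = 1 := by rw [inner_map_self_smul, hμ, ← hTu₀]; simp
  set ρ := (⟪u, T v⟫_ℂ + ⟪v, T u⟫_ℂ).re
  let w : ℝ → E := fun s => (s : ℂ) • u + ((1 - s : ℝ) : ℂ) • v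
  have hw : ∀ s, ⟪w s, T (w s)⟫_ℂ = ((s ^ 2 + s * (1 - s) * ρ : ℝ) : ℂ) := by
    intro s
    have hρ : ⟪u, T v⟫_ℂ + ⟪v, T u⟫_ℂ = ρ := Complex.ext rfl (by simpa using hcross)
    rw [inner_map_self_ofReal_smul_add, hTu, ← hTv, hρ]
    push_cast
    ring
  have hw_ne : ∀ s, w s ≠ 0 := T.ofReal_smul_add_ofReal_one_sub_smul_ne_zero
    (ne_zero_of_norm_ne_zero (by simp [hv])) (by simp [hTu]) hTv.symm
  let F : ℝ → ℝ := fun s => (s ^ 2 + s * (1 - s) * ρ) / ‖w s‖ ^ 2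
  have hF : Continuous F := by
    refine Continuous.div (by fun_prop) (by fun_prop) fun s => ?_
    exact pow_ne_zero 2 (norm_ne_zero_iff.2 (hw_ne s))
  obtain ⟨s, -, hs⟩ := intermediate_value_Icc zero_le_one hF.continuousOn
    (by simpa [F, w, hu, hv] using ht)
  rw [← hs]
  convert T.div_norm_sq_mem_numericalRange (hw_ne s) using 1
  simp [hw, F]

theorem convex_numericalRange : Convex ℝ T.numericalRange := by
  rw [convex_iff_segment_subset]
  intro z₀ h₀ z₁ h₁
  rcases eq_or_ne z₀ z₁ with rfl | hne
  · rwa [segment_same, Set.singleton_subset_iff]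
  have hd : z₁ - z₀ ≠ 0 := sub_ne_zero.2 hne.symm
  have hB := T.numericalRange_smul_add_smul_id (z₁ - z₀)⁻¹ (-(z₁ - z₀)⁻¹ * z₀)
  rw [segment_eq_image_lineMap]
  rintro _ ⟨t, ht, rfl⟩
  obtain ⟨z, hz, hzt⟩ : (t : ℂ) ∈ (fun z => (z₁ - z₀)⁻¹ * z + -(z₁ - z₀)⁻¹ * z₀) ''
      T.numericalRange :=
    hB ▸ ofReal_mem_numericalRange_of_zero_mem_of_one_mem _
      (hB ▸ ⟨z₀, h₀, by ring⟩) (hB ▸ ⟨z₁, h₁, by field_simp; ring⟩) ht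
  convert hz using 1
  rw [AffineMap.lineMap_apply, vsub_eq_sub, vadd_eq_add, Complex.real_smul, ← hzt]
  field_simp
  ring

end LinearMap

theorem numRange_convex_general (n : ℕ) (A : Matrix (Fin n) (Fin n) ℂ) :
    Convex ℝ (numRange A) :=
  (Matrix.toEuclideanLin A).convex_numericalRange

/-- Toeplitz–Hausdorff theorem: the numerical range of any square complex matrix is convex. -/
theorem numRange_convex (n : ℕ) (hn : 1 ≤ n) (A : Matrix (Fin n) (Fin n) ℂ) :
    Convex ℝ (numRange A) :=
  numRange_convex_general n A
end

section
/- Let A be a 2×2 complex matrix whose characteristic polynomial is (X − a)(X − b) for a, b ∈ ℂ. Then the numerical range of A is the closed elliptical disk with foci a and b and minor axis of length (tr(A*A) − |a|² − |b|²)^{1/2}; explicitly, W(A) = { z ∈ ℂ : |z − a| + |z − b| ≤ √( tr(A*A) − |a|² − |b|² + |a − b|² ) }, where A* denotes the conjugate transpose of A. -/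
open scoped Matrix

/-!
Completing a unit eigenvector for `a` to an orthonormal basis shows that `A` is unitarily similar
to `T = !![a, c; 0, b]`; this changes neither `W(A)` nor `tr(A*A) = |a|² + |b|² + |c|²`. For a unit
vector `x`, `⟨x, T x⟩ = p a + (1 - p) b + c w` with `p = |x₀|²` and `w = conj x₀ x₁`, where
`|w|² = p (1 - p)`. Centred at `(a + b) / 2`, with `d = (a - b) / 2` and `s = 2 p - 1`, these are
the circles of radius `β √(1 - s²)`, `β = |c| / 2`, around the points `s d` of the focal segment,
and their union over `s ∈ [-1, 1]` is the elliptical disk `|x - d| + |x + d| ≤ 2 σ`,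
`σ² = |d|² + β²`: on such a circle `σ² |x ∓ d|² = (σ² ∓ ⟨d, x⟩)² - (⟨d, x⟩ - σ² s)²`.
-/

section EllipticalDisk

open RealInnerProductSpace

variable {E : Type*} [NormedAddCommGroup E] [InnerProductSpace ℝ E] {x d : E} {β s : ℝ}

theorem inner_le_of_sq_norm_sub_smul_eq (hs : s ^ 2 ≤ 1)
    (h : ‖x - s • d‖ ^ 2 = β ^ 2 * (1 - s ^ 2)) :
    ⟪d, x⟫ ≤ ‖d‖ ^ 2 + β ^ 2 := by
  have hcs := real_inner_mul_inner_self_le d (x - s • d)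
  rw [real_inner_self_eq_norm_sq, real_inner_self_eq_norm_sq, h, inner_sub_right,
    inner_smul_right, real_inner_self_eq_norm_sq] at hcs
  have hs1 : s ≤ 1 := by nlinarith
  have hF := sq_nonneg ‖d‖
  have hB := sq_nonneg β
  nlinarith [mul_nonneg (mul_nonneg hF hB) (sq_nonneg (1 - s)), mul_nonneg hF (sub_nonneg.2 hs1)]

theorem sqrt_mul_norm_sub_le_of_sq_norm_sub_smul_eq (hs : s ^ 2 ≤ 1)
    (h : ‖x - s • d‖ ^ 2 = β ^ 2 * (1 - s ^ 2)) :
    √(‖d‖ ^ 2 + β ^ 2) * ‖x - d‖ ≤ ‖d‖ ^ 2 + β ^ 2 - ⟪d, x⟫ := by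
  have hR := inner_le_of_sq_norm_sub_smul_eq hs h
  rw [norm_sub_sq_real, inner_smul_right, norm_smul, mul_pow, Real.norm_eq_abs, sq_abs,
    real_inner_comm d x] at h
  have key : (‖d‖ ^ 2 + β ^ 2 - ⟪d, x⟫) ^ 2 - (‖d‖ ^ 2 + β ^ 2) * ‖x - d‖ ^ 2
      = (⟪d, x⟫ - (‖d‖ ^ 2 + β ^ 2) * s) ^ 2 := by
    rw [norm_sub_sq_real, real_inner_comm d x]
    linear_combination -(‖d‖ ^ 2 + β ^ 2) * h
  rw [← pow_le_pow_iff_left₀ (by positivity) (by linarith) two_ne_zero, mul_pow,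
    Real.sq_sqrt (by positivity)]
  nlinarith [sq_nonneg (⟪d, x⟫ - (‖d‖ ^ 2 + β ^ 2) * s)]

theorem norm_sub_add_norm_add_le_of_sq_norm_sub_smul_eq (hs : s ^ 2 ≤ 1)
    (h : ‖x - s • d‖ ^ 2 = β ^ 2 * (1 - s ^ 2)) :
    ‖x - d‖ + ‖x + d‖ ≤ 2 * √(‖d‖ ^ 2 + β ^ 2) := by
  have h₁ := sqrt_mul_norm_sub_le_of_sq_norm_sub_smul_eq hs h
  have h₂ := sqrt_mul_norm_sub_le_of_sq_norm_sub_smul_eq (d := -d) (s := -s) (by simpa using hs)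
    (by simpa using h)
  rw [sub_neg_eq_add, norm_neg, inner_neg_left] at h₂
  rcases (Real.sqrt_nonneg (‖d‖ ^ 2 + β ^ 2)).eq_or_lt with hσ | hσ
  · have hσ2 := Real.sqrt_eq_zero'.1 hσ.symm
    have hd : d = 0 := by rw [← norm_eq_zero]; nlinarith [sq_nonneg ‖d‖, sq_nonneg β]
    have hβ : β ^ 2 = 0 := by nlinarith [sq_nonneg ‖d‖, sq_nonneg β]
    rw [hd, smul_zero, sub_zero, hβ, zero_mul, sq_eq_zero_iff, norm_eq_zero] at h
    simp [h, hd]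
  · refine le_of_mul_le_mul_left ?_ hσ
    nlinarith [Real.mul_self_sqrt (by positivity : 0 ≤ ‖d‖ ^ 2 + β ^ 2)]

theorem mul_sq_norm_le_of_norm_sub_add_norm_add_le
    (h : ‖x - d‖ + ‖x + d‖ ≤ 2 * √(‖d‖ ^ 2 + β ^ 2)) :
    (‖d‖ ^ 2 + β ^ 2) * ‖x‖ ^ 2 ≤ (‖d‖ ^ 2 + β ^ 2) * β ^ 2 + ⟪d, x⟫ ^ 2 := by
  have hsum : (‖x - d‖ + ‖x + d‖) ^ 2 ≤ 4 * (‖d‖ ^ 2 + β ^ 2) := by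
    calc (‖x - d‖ + ‖x + d‖) ^ 2 ≤ (2 * √(‖d‖ ^ 2 + β ^ 2)) ^ 2 := by gcongr
      _ = 4 * (‖d‖ ^ 2 + β ^ 2) := by rw [mul_pow, Real.sq_sqrt (by positivity)]; ring
  have hL := norm_sub_sq_real x d
  have hM := norm_add_sq_real x d
  rw [real_inner_comm d x] at hL hM
  have hLM : ‖x - d‖ * ‖x + d‖ ≤ 2 * β ^ 2 + ‖d‖ ^ 2 - ‖x‖ ^ 2 := by nlinarith
  have hLM2 : (‖x - d‖ * ‖x + d‖) ^ 2 ≤ (2 * β ^ 2 + ‖d‖ ^ 2 - ‖x‖ ^ 2) ^ 2 :=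
    pow_le_pow_left₀ (by positivity) hLM 2
  rw [mul_pow, hL, hM] at hLM2
  nlinarith [hLM2]

theorem exists_sq_norm_sub_smul_eq_of_norm_sub_add_norm_add_le
    (h : ‖x - d‖ + ‖x + d‖ ≤ 2 * √(‖d‖ ^ 2 + β ^ 2)) :
    ∃ s : ℝ, s ^ 2 ≤ 1 ∧ ‖x - s • d‖ ^ 2 = β ^ 2 * (1 - s ^ 2) := by
  have hΔ := mul_sq_norm_le_of_norm_sub_add_norm_add_le h
  set σ2 := ‖d‖ ^ 2 + β ^ 2
  set R := ⟪d, x⟫ with hR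
  have hx : ‖x‖ ≤ √σ2 := by
    have := norm_add_le (x - d) (x + d)
    rw [show x - d + (x + d) = (2 : ℝ) • x by module, norm_smul, Real.norm_two] at this
    linarith
  have hd : ‖d‖ ≤ √σ2 := Real.le_sqrt_of_sq_le (by linarith [sq_nonneg β])
  have hRσ : |R| ≤ σ2 := by
    calc |R| ≤ ‖d‖ * ‖x‖ := abs_real_inner_le_norm d x
      _ ≤ √σ2 * √σ2 := by gcongr
      _ = σ2 := Real.mul_self_sqrt (by positivity)
  rcases (show 0 ≤ σ2 by positivity).eq_or_lt with hσ | hσ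
  · refine ⟨0, by norm_num, ?_⟩
    have hx0 : ‖x‖ = 0 := le_antisymm (by simpa [← hσ] using hx) (norm_nonneg x)
    have hβ : β ^ 2 = 0 := by nlinarith [sq_nonneg ‖d‖, sq_nonneg β]
    simp [hx0, hβ]
  -- `s` is the larger root of `σ2 s² - 2 R s + ‖x‖² - β² = 0`, whose discriminant is `hΔ`.
  set q := √(σ2 * β ^ 2 + R ^ 2 - σ2 * ‖x‖ ^ 2)
  have hq0 : 0 ≤ q := Real.sqrt_nonneg _
  have hq2 : q ^ 2 = σ2 * β ^ 2 + R ^ 2 - σ2 * ‖x‖ ^ 2 := Real.sq_sqrt (by linarith)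
  have hqle : q ≤ σ2 - R := by
    refine Real.sqrt_le_iff.2 ⟨by linarith [le_abs_self R], ?_⟩
    nlinarith [mul_nonneg hσ.le (sq_nonneg ‖x - d‖), norm_sub_sq_real x d, real_inner_comm d x]
  refine ⟨(R + q) / σ2, ?_, ?_⟩
  · rw [sq_le_one_iff_abs_le_one, abs_le, le_div_iff₀ hσ, div_le_one hσ]
    constructor <;> linarith [neg_abs_le R]
  · rw [norm_sub_sq_real, inner_smul_right, norm_smul, mul_pow, Real.norm_eq_abs, sq_abs,
      real_inner_comm d x, ← hR]
    field_simp
    linear_combination σ2 * hq2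

theorem Complex.exists_eq_add_mul_iff_norm_sub_add_norm_sub_le (a b c z : ℂ) :
    (∃ p : ℝ, ∃ w : ℂ, 0 ≤ p ∧ p ≤ 1 ∧ ‖w‖ ^ 2 = p * (1 - p) ∧
        z = p * a + (1 - p) * b + c * w) ↔
      ‖z - a‖ + ‖z - b‖ ≤ √(‖c‖ ^ 2 + ‖a - b‖ ^ 2) := by
  set x := z - (a + b) / 2
  set d := (a - b) / 2
  have hxd (s p : ℝ) (hp : s = 2 * p - 1) : x - s • d = z - (p * a + (1 - p) * b) := by
    simp only [x, d, Complex.real_smul, hp]; push_cast; ring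
  have hrad : √(‖c‖ ^ 2 + ‖a - b‖ ^ 2) = 2 * √(‖d‖ ^ 2 + (‖c‖ / 2) ^ 2) := by
    rw [show ‖d‖ = ‖a - b‖ / 2 by simp [d], ← Real.sqrt_sq zero_le_two,
      ← Real.sqrt_mul (by norm_num)]
    ring_nf
  rw [show z - a = x - d by ring, show z - b = x + d by ring, hrad]
  constructor
  · rintro ⟨p, w, hp0, hp1, hw, rfl⟩
    refine norm_sub_add_norm_add_le_of_sq_norm_sub_smul_eq (s := 2 * p - 1) (by nlinarith) ?_
    rw [hxd _ p rfl, add_sub_cancel_left, norm_mul, mul_pow, hw]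
    ring
  · intro h
    obtain ⟨s, hs, hxs⟩ := exists_sq_norm_sub_smul_eq_of_norm_sub_add_norm_add_le h
    obtain ⟨p, rfl⟩ : ∃ p : ℝ, s = 2 * p - 1 := ⟨(1 + s) / 2, by ring⟩
    rw [hxd _ p rfl] at hxs
    rcases eq_or_ne c 0 with rfl | hc
    · refine ⟨p, √(p * (1 - p)), by nlinarith, by nlinarith, ?_, ?_⟩
      · rw [Complex.norm_real, Real.norm_eq_abs, sq_abs, Real.sq_sqrt (by nlinarith)]
      · simpa [sub_eq_zero] using hxs
    · refine ⟨p, (z - (p * a + (1 - p) * b)) / c, by nlinarith, by nlinarith, ?_, ?_⟩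
      · rw [norm_div, div_pow, hxs]
        field_simp
        ring
      · field_simp
        ring

end EllipticalDisk

section UnitaryTriangularization

open Matrix Polynomial ComplexConjugate

theorem numRange_star_mul_mul {n : ℕ} {U : Matrix (Fin n) (Fin n) ℂ}
    (hU : U ∈ unitaryGroup (Fin n) ℂ) (A : Matrix (Fin n) (Fin n) ℂ) :
    numRange (star U * A * U) = numRange A := by
  set u := toEuclideanCLM (n := Fin n) (𝕜 := ℂ) U with hu_def
  have hu : u ∈ unitary _ := Unitary.map_mem _ hU
  have key (x : EuclideanSpace ℂ (Fin n)) :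
      inner ℂ x (toEuclideanLin (star U * A * U) x) =
        inner ℂ (u x) (toEuclideanLin A (u x)) := by
    rw [← coe_toEuclideanCLM_eq_toEuclideanLin, ← coe_toEuclideanCLM_eq_toEuclideanLin]
    simp only [map_mul, map_star, ← hu_def, ContinuousLinearMap.star_eq_adjoint,
      ContinuousLinearMap.toLinearMap_mul, Module.End.mul_apply, ContinuousLinearMap.coe_coe,
      ContinuousLinearMap.adjoint_inner_right]
  ext z
  constructor
  · rintro ⟨x, hx, rfl⟩
    exact ⟨u x, (ContinuousLinearMap.norm_map_of_mem_unitary hu x).trans hx, key x⟩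
  · rintro ⟨y, hy, rfl⟩
    have hy' : u (star u y) = y := by
      simpa using congr($(Unitary.mul_star_self_of_mem hu) y)
    refine ⟨star u y, ?_, ?_⟩
    · rw [ContinuousLinearMap.norm_map_of_mem_unitary (Unitary.star_mem hu), hy]
    · rw [key, hy']

theorem Matrix.trace_conjTranspose_mul_self_star_mul_mul {n R : Type*} [Fintype n]
    [DecidableEq n] [CommRing R] [StarRing R] {U : Matrix n n R} (hU : U ∈ unitaryGroup n R)
    (A : Matrix n n R) :
    ((star U * A * U)ᴴ * (star U * A * U)).trace = (Aᴴ * A).trace := by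
  have hUU := Unitary.mul_star_self_of_mem hU
  have h : (star U * A * U)ᴴ * (star U * A * U) = star U * (Aᴴ * A) * U := by
    simp only [← star_eq_conjTranspose, star_mul, star_star, mul_assoc]
    rw [← mul_assoc U, hUU, one_mul]
  rw [h, trace_mul_comm, ← mul_assoc, hUU, one_mul]

theorem Matrix.exists_unit_eigenvector_fin_two (A : Matrix (Fin 2) (Fin 2) ℂ) {a : ℂ}
    (ha : A.charpoly.IsRoot a) :
    ∃ v : Fin 2 → ℂ, ‖v 0‖ ^ 2 + ‖v 1‖ ^ 2 = 1 ∧ A *ᵥ v = a • v := by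
  rw [IsRoot, eval_charpoly, ← exists_mulVec_eq_zero_iff] at ha
  obtain ⟨v, hv0, hv⟩ := ha
  have hnorm := EuclideanSpace.norm_eq (WithLp.toLp 2 v)
  simp only [Fin.sum_univ_two] at hnorm
  have hS : 0 < ‖v 0‖ ^ 2 + ‖v 1‖ ^ 2 := by
    rw [← Real.sqrt_pos, ← hnorm]; simpa using hv0
  refine ⟨(‖WithLp.toLp 2 v‖⁻¹ : ℂ) • v, ?_, ?_⟩
  · simp only [Pi.smul_apply, smul_eq_mul, norm_mul, norm_inv, Complex.norm_real,
      Real.norm_eq_abs, sq_abs, mul_pow, ← mul_add, hnorm, inv_pow, Real.sq_sqrt hS.le]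
    exact inv_mul_cancel₀ hS.ne'
  · rw [sub_mulVec, sub_eq_zero, scalar_apply, ← smul_one_eq_diagonal, smul_mulVec,
      one_mulVec] at hv
    rw [mulVec_smul, ← hv, smul_comm]

theorem Matrix.mem_unitaryGroup_fin_two (v : Fin 2 → ℂ) (hv : ‖v 0‖ ^ 2 + ‖v 1‖ ^ 2 = 1) :
    !![v 0, -conj (v 1); v 1, conj (v 0)] ∈ unitaryGroup (Fin 2) ℂ := by
  have h : conj (v 0) * v 0 + conj (v 1) * v 1 = 1 := by
    simp only [Complex.conj_mul']; exact_mod_cast hv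
  rw [mem_unitaryGroup_iff']
  ext i j
  fin_cases i <;> fin_cases j <;> simp [mul_apply, Fin.sum_univ_two, mul_comm] <;>
    linear_combination h

theorem Matrix.charpoly_upperTriangular_fin_two (a b c : ℂ) :
    (!![a, c; 0, b]).charpoly = (X - C a) * (X - C b) := by
  rw [charpoly_fin_two]
  simp only [trace_fin_two_of, det_fin_two_of, map_add, map_mul, mul_zero, sub_zero]
  ring_nf

theorem Matrix.exists_unitary_conj_eq_upperTriangular_fin_two (A : Matrix (Fin 2) (Fin 2) ℂ)
    (a b : ℂ) (h : A.charpoly = (X - C a) * (X - C b)) :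
    ∃ U ∈ unitaryGroup (Fin 2) ℂ, ∃ c, star U * A * U = !![a, c; 0, b] := by
  obtain ⟨v, hv, hAv⟩ := exists_unit_eigenvector_fin_two A (a := a) (by simp [h])
  set U := !![v 0, -conj (v 1); v 1, conj (v 0)]
  have hU := mem_unitaryGroup_fin_two v hv
  have hUe : U *ᵥ Pi.single 0 1 = v := by
    ext i; fin_cases i <;> simp [U]
  have hcol : (star U * A * U) *ᵥ Pi.single 0 1 = a • Pi.single 0 1 := by
    rw [← mulVec_mulVec, hUe, ← mulVec_mulVec, hAv, mulVec_smul, ← hUe, mulVec_mulVec,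
      Unitary.star_mul_self_of_mem hU, one_mulVec]
  have h00 : (star U * A * U) 0 0 = a := by simpa using congrFun hcol 0
  have h10 : (star U * A * U) 1 0 = 0 := by simpa using congrFun hcol 1
  refine ⟨U, hU, (star U * A * U) 0 1, ?_⟩
  rw [eta_fin_two (star U * A * U), h00, h10]
  congr
  have hchar : (star U * A * U).charpoly = A.charpoly := by
    rw [charpoly_mul_comm, ← mul_assoc, Unitary.mul_star_self_of_mem hU, one_mul]
  rw [eta_fin_two (star U * A * U), h00, h10, charpoly_upperTriangular_fin_two, h] at hchar
  simpa using mul_left_cancel₀ (X_sub_C_ne_zero a) hchar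

theorem Matrix.trace_conjTranspose_mul_self_upperTriangular_fin_two (a b c : ℂ) :
    (!![a, c; 0, b]ᴴ * !![a, c; 0, b]).trace = ((‖a‖ ^ 2 + ‖b‖ ^ 2 + ‖c‖ ^ 2 : ℝ) : ℂ) := by
  simp only [trace_fin_two, mul_apply, conjTranspose_apply, of_apply, cons_val', cons_val_zero,
    cons_val_one, cons_val_fin_one, RCLike.star_def, Complex.conj_mul', Fin.sum_univ_two,
    norm_zero, Complex.ofReal_zero, zero_pow two_ne_zero, add_zero, Complex.ofReal_add,
    Complex.ofReal_pow]
  ring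

theorem EuclideanSpace.norm_eq_one_iff_fin_two {𝕜 : Type*} [RCLike 𝕜] (x : EuclideanSpace 𝕜 (Fin 2)) :
    ‖x‖ = 1 ↔ ‖x 0‖ ^ 2 + ‖x 1‖ ^ 2 = 1 := by
  rw [EuclideanSpace.norm_eq, Real.sqrt_eq_one, Fin.sum_univ_two]

theorem Matrix.inner_toEuclideanLin_upperTriangular_fin_two (a b c : ℂ)
    (x : EuclideanSpace ℂ (Fin 2)) :
    inner ℂ x (toEuclideanLin !![a, c; 0, b] x) =
      (‖x 0‖ ^ 2 : ℝ) * a + (‖x 1‖ ^ 2 : ℝ) * b + c * (conj (x 0) * x 1) := by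
  simp only [PiLp.inner_apply, ofLp_toLpLin, toLin'_apply, mulVec, dotProduct, of_apply,
    cons_val', cons_val_fin_one, Fin.sum_univ_two, cons_val_zero, cons_val_one,
    RCLike.inner_apply, zero_mul, zero_add, Complex.ofReal_pow, ← Complex.conj_mul']
  ring

theorem numRange_upperTriangular_fin_two (a b c : ℂ) :
    numRange !![a, c; 0, b] = {z | ∃ p : ℝ, ∃ w : ℂ, 0 ≤ p ∧ p ≤ 1 ∧ ‖w‖ ^ 2 = p * (1 - p) ∧
      z = p * a + (1 - p) * b + c * w} := by
  ext z
  simp only [numRange, Set.mem_ofPred_eq, inner_toEuclideanLin_upperTriangular_fin_two,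
    EuclideanSpace.norm_eq_one_iff_fin_two]
  constructor
  · rintro ⟨x, hx, rfl⟩
    refine ⟨‖x 0‖ ^ 2, conj (x 0) * x 1, by positivity, by linarith [sq_nonneg ‖x 1‖], ?_, ?_⟩
    · rw [norm_mul, Complex.norm_conj, mul_pow]; linear_combination ‖x 0‖ ^ 2 * hx
    · have hx' := congrArg ((↑) : ℝ → ℂ) hx
      push_cast at hx' ⊢
      linear_combination b * hx'
  · rintro ⟨p, w, hp0, hp1, hw, rfl⟩
    rcases hp0.eq_or_lt with rfl | hp
    · have hw0 : w = 0 := by simpa using hw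
      exact ⟨WithLp.toLp 2 ![0, 1], by simp, by simp [hw0]⟩
    · obtain ⟨q, hq, rfl⟩ : ∃ q > 0, q ^ 2 = p := ⟨√p, Real.sqrt_pos.2 hp, Real.sq_sqrt hp0⟩
      have hwq : ‖w / q‖ ^ 2 = 1 - q ^ 2 := by
        rw [norm_div, div_pow, hw, Complex.norm_real, Real.norm_of_nonneg hq.le]
        field_simp
      refine ⟨WithLp.toLp 2 ![(q : ℂ), w / q], ?_, ?_⟩
      · simp only [Matrix.cons_val_zero, Matrix.cons_val_one, Complex.norm_real,
          Real.norm_of_nonneg hq.le, hwq]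
        ring
      · simp only [Matrix.cons_val_zero, Matrix.cons_val_one, Complex.norm_real,
          Real.norm_of_nonneg hq.le, hwq, Complex.conj_ofReal,
          mul_div_cancel₀ w (Complex.ofReal_ne_zero.2 hq.ne')]
        push_cast
        ring

end UnitaryTriangularization

/-- Elliptical range theorem: if the characteristic polynomial of a `2 × 2` matrix `A` is
`(X - a)(X - b)`, then `W(A)` is the closed elliptical disk with foci `a`, `b` and minor axis
of length `(tr(A*A) - |a|² - |b|²)^{1/2}`. -/
theorem elliptical_range (A : Matrix (Fin 2) (Fin 2) ℂ) (a b : ℂ)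
    (h : A.charpoly = (Polynomial.X - Polynomial.C a) * (Polynomial.X - Polynomial.C b)) :
    numRange A = {z : ℂ | ‖z - a‖ + ‖z - b‖ ≤
      Real.sqrt ((Aᴴ * A).trace.re - ‖a‖ ^ 2 - ‖b‖ ^ 2
        + ‖a - b‖ ^ 2)} := by
  obtain ⟨U, hU, c, hT⟩ := A.exists_unitary_conj_eq_upperTriangular_fin_two a b h
  have hradicand : (Aᴴ * A).trace.re - ‖a‖ ^ 2 - ‖b‖ ^ 2 + ‖a - b‖ ^ 2 = ‖c‖ ^ 2 + ‖a - b‖ ^ 2 := by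
    rw [← Matrix.trace_conjTranspose_mul_self_star_mul_mul hU, hT,
      Matrix.trace_conjTranspose_mul_self_upperTriangular_fin_two, Complex.ofReal_re]
    ring
  rw [← numRange_star_mul_mul hU, hT, numRange_upperTriangular_fin_two, hradicand]
  ext z
  exact Complex.exists_eq_add_mul_iff_norm_sub_add_norm_sub_le a b c z
end

section
/- Let A be a 2×2 complex matrix whose characteristic polynomial is (X − a)(X − b) for a, b ∈ ℂ. Then tr(A*A) − |a|² − |b|² ≥ 0 and there exists a 2×2 unitary matrix U such that U* A U is the upper-triangular matrix with rows (a, p) and (0, b), where p = (tr(A*A) − |a|² − |b|²)^{1/2} and A* denotes the conjugate transpose of A. -/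
/-!
Conjugating by a unitary whose first column is a unit eigenvector for `a` makes `A` upper
triangular with diagonal `(a, b)`, the second diagonal entry being forced by the trace. A diagonal
unitary then turns the corner entry `t` into `|t|`. Since `tr(A*A)` is invariant under unitary
conjugation and equals the sum of the squared moduli of the entries, `|t|² = tr(A*A) - |a|² - |b|²`.
-/

open scoped Matrix
open Matrix Polynomial Complex ComplexConjugate

namespace Matrix

theorem re_trace_conjTranspose_mul_self {m n 𝕜 : Type*} [Fintype m] [Fintype n] [RCLike 𝕜]
    (A : Matrix m n 𝕜) : RCLike.re (Aᴴ * A).trace = ∑ j, ∑ i, ‖A i j‖ ^ 2 := by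
  simp only [trace, diag, mul_apply, conjTranspose_apply, RCLike.star_def, RCLike.conj_mul,
    map_sum]
  norm_cast

variable {n R : Type*} [Fintype n] [DecidableEq n]

theorem exists_mulVec_eq_smul_of_isRoot_charpoly {K : Type*} [Field K] {A : Matrix n n K} {a : K}
    (ha : A.charpoly.IsRoot a) : ∃ v ≠ 0, A *ᵥ v = a • v := by
  obtain ⟨v, hv, hAv⟩ := exists_mulVec_eq_zero_iff.mpr ((eval_charpoly A a).symm.trans ha)
  refine ⟨v, hv, ?_⟩
  rw [sub_mulVec, scalar_apply, diagonal_const_mulVec, sub_eq_zero] at hAv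
  exact hAv.symm

theorem exists_unit_eigenvector_of_isRoot_charpoly {𝕜 : Type*} [RCLike 𝕜] {A : Matrix n n 𝕜}
    {a : 𝕜} (ha : A.charpoly.IsRoot a) : ∃ v, star v ⬝ᵥ v = 1 ∧ A *ᵥ v = a • v := by
  obtain ⟨v, hv, hAv⟩ := exists_mulVec_eq_smul_of_isRoot_charpoly ha
  set x : EuclideanSpace 𝕜 n := WithLp.toLp 2 v
  have hx : (‖x‖ : 𝕜) ≠ 0 := by simpa [x] using hv
  refine ⟨((‖x‖⁻¹ : ℝ) : 𝕜) • v, ?_, by rw [mulVec_smul, hAv, smul_comm]⟩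
  have hvv : star v ⬝ᵥ v = (‖x‖ : 𝕜) ^ 2 := by
    rw [← inner_self_eq_norm_sq_to_K, EuclideanSpace.inner_toLp_toLp, dotProduct_comm]
  rw [star_smul, smul_dotProduct, dotProduct_smul, hvv, RCLike.star_def, RCLike.conj_ofReal]
  simp only [smul_eq_mul, RCLike.ofReal_inv]
  field_simp

theorem trace_eq_add_of_charpoly_eq {K : Type*} [Field K] {A : Matrix n n K} {a b : K}
    (h : A.charpoly = (X - C a) * (X - C b)) : A.trace = a + b := by
  have hsplit : A.charpoly.Splits := h ▸ (Splits.X_sub_C a).mul (Splits.X_sub_C b)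
  rw [trace_eq_sum_roots_charpoly_of_splits hsplit, h,
    roots_mul (mul_ne_zero (X_sub_C_ne_zero a) (X_sub_C_ne_zero b)), roots_X_sub_C, roots_X_sub_C]
  simp

theorem trace_conjTranspose_mul_mul_of_mem_unitaryGroup [CommRing R] [StarRing R]
    {U : Matrix n n R} (hU : U ∈ unitaryGroup n R) (A : Matrix n n R) :
    (Uᴴ * A * U).trace = A.trace := by
  rw [trace_mul_cycle, ← star_eq_conjTranspose, mem_unitaryGroup_iff.mp hU, one_mul]

theorem conjTranspose_mul_self_unitary_conj [CommRing R] [StarRing R] {U : Matrix n n R}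
    (hU : U ∈ unitaryGroup n R) (A : Matrix n n R) :
    (Uᴴ * A * U)ᴴ * (Uᴴ * A * U) = Uᴴ * (Aᴴ * A) * U := by
  simp only [conjTranspose_mul, conjTranspose_conjTranspose, Matrix.mul_assoc]
  rw [← Matrix.mul_assoc U, ← star_eq_conjTranspose, mem_unitaryGroup_iff.mp hU, Matrix.one_mul]

theorem col_unitary_conj_of_mulVec_col_eq_smul [CommRing R] [StarRing R] {U A : Matrix n n R}
    (hU : U ∈ unitaryGroup n R) {i : n} {a : R} (hAv : A *ᵥ U.col i = a • U.col i) :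
    (Uᴴ * A * U).col i = a • Pi.single i 1 := by
  rw [← mulVec_single_one, ← mulVec_mulVec, ← mulVec_mulVec, mulVec_single_one, hAv,
    mulVec_smul, ← mulVec_single_one, mulVec_mulVec, ← star_eq_conjTranspose,
    mem_unitaryGroup_iff'.mp hU, one_mulVec]

theorem fin_two_mem_unitaryGroup [CommRing R] [StarRing R] {x y : R}
    (h : star x * x + star y * y = 1) : !![x, -star y; y, star x] ∈ unitaryGroup (Fin 2) R := by
  rw [mem_unitaryGroup_iff']
  ext i j
  fin_cases i <;> fin_cases j
  · simpa [mul_apply, Fin.sum_univ_two] using h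
  · simp [mul_apply, Fin.sum_univ_two, mul_comm]
  · simp [mul_apply, Fin.sum_univ_two, mul_comm]
  · simpa [mul_apply, Fin.sum_univ_two, mul_comm, add_comm] using h

theorem exists_unitary_conj_eq_upperTriangular_fin_two_s2 {𝕜 : Type*} [RCLike 𝕜]
    {A : Matrix (Fin 2) (Fin 2) 𝕜} {a b : 𝕜} (h : A.charpoly = (X - C a) * (X - C b)) :
    ∃ U ∈ unitaryGroup (Fin 2) 𝕜, ∃ t, Uᴴ * A * U = !![a, t; 0, b] := by
  have ha : A.charpoly.IsRoot a := by simp [h]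
  obtain ⟨v, hv, hAv⟩ := exists_unit_eigenvector_of_isRoot_charpoly ha
  set U := !![v 0, -star (v 1); v 1, star (v 0)]
  have hU : U ∈ unitaryGroup (Fin 2) 𝕜 :=
    fin_two_mem_unitaryGroup (by simpa [dotProduct] using hv)
  have hcol : U.col 0 = v := by ext i; fin_cases i <;> rfl
  have hcol0 := col_unitary_conj_of_mulVec_col_eq_smul hU (i := 0) (hcol ▸ hAv)
  have htr := trace_conjTranspose_mul_mul_of_mem_unitaryGroup hU A
  rw [trace_eq_add_of_charpoly_eq h, trace_fin_two] at htr
  have h00 : (Uᴴ * A * U) 0 0 = a := by simpa using congrFun hcol0 0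
  have h10 : (Uᴴ * A * U) 1 0 = 0 := by simpa using congrFun hcol0 1
  have h11 : (Uᴴ * A * U) 1 1 = b := by linear_combination htr - h00
  refine ⟨U, hU, (Uᴴ * A * U) 0 1, ?_⟩
  conv_lhs => rw [eta_fin_two (Uᴴ * A * U), h00, h10, h11]

theorem exists_unitary_conj_upperTriangular_eq_norm_fin_two (a t b : ℂ) :
    ∃ D ∈ unitaryGroup (Fin 2) ℂ, Dᴴ * !![a, t; 0, b] * D = !![a, (‖t‖ : ℂ); 0, b] := by
  set c := exp (-(t.arg * I))
  have hc : conj c * c = 1 := by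
    rw [← Complex.exp_conj, ← Complex.exp_add]; simp
  have htc : t * c = ‖t‖ := by
    rw [← norm_mul_exp_arg_mul_I t, mul_assoc, ← Complex.exp_add]; simp
  have hcb : conj c * b * c = b := by linear_combination b * hc
  refine ⟨diagonal ![1, c], ?_, ?_⟩
  · rw [mem_unitaryGroup_iff', star_eq_conjTranspose, diagonal_conjTranspose,
      diagonal_mul_diagonal]
    ext i j
    fin_cases i <;> fin_cases j <;> simp [hc]
  · ext i j
    fin_cases i <;> fin_cases j <;> simp [mul_apply, Fin.sum_univ_two, htc, hcb]

end Matrix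

/-- Schur-type triangularization for `2 × 2` matrices: if the characteristic polynomial of `A`
is `(X - a)(X - b)`, then `tr(A*A) - |a|² - |b|² ≥ 0` and `A` is unitarily equivalent to the
upper-triangular matrix `[[a, p], [0, b]]` with `p = (tr(A*A) - |a|² - |b|²)^{1/2}`. -/
theorem unitarily_triangularizable (A : Matrix (Fin 2) (Fin 2) ℂ) (a b : ℂ)
    (h : A.charpoly = (Polynomial.X - Polynomial.C a) * (Polynomial.X - Polynomial.C b)) :
    0 ≤ (Aᴴ * A).trace.re - ‖a‖ ^ 2 - ‖b‖ ^ 2 ∧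
    ∃ U ∈ Matrix.unitaryGroup (Fin 2) ℂ,
      Uᴴ * A * U =
        !![a, (Real.sqrt ((Aᴴ * A).trace.re - ‖a‖ ^ 2 - ‖b‖ ^ 2) : ℂ);
           0, b] := by
  obtain ⟨U, hU, t, hUAU⟩ := exists_unitary_conj_eq_upperTriangular_fin_two_s2 h
  obtain ⟨D, hD, hDTD⟩ := exists_unitary_conj_upperTriangular_eq_norm_fin_two a t b
  have hfrob : (Aᴴ * A).trace.re = ‖a‖ ^ 2 + ‖t‖ ^ 2 + ‖b‖ ^ 2 := by
    rw [← trace_conjTranspose_mul_mul_of_mem_unitaryGroup hU,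
      ← conjTranspose_mul_self_unitary_conj hU, hUAU, ← RCLike.re_eq_complex_re,
      re_trace_conjTranspose_mul_self]
    simp only [Fin.sum_univ_two, of_apply, cons_val', cons_val_fin_one, cons_val_zero,
      cons_val_one, norm_zero, ne_eq, OfNat.ofNat_ne_zero, not_false_eq_true, zero_pow, add_zero]
    ring
  have hdefect : (Aᴴ * A).trace.re - ‖a‖ ^ 2 - ‖b‖ ^ 2 = ‖t‖ ^ 2 := by rw [hfrob]; ring
  refine ⟨hdefect ▸ sq_nonneg _, U * D, mul_mem hU hD, ?_⟩
  rw [hdefect, Real.sqrt_sq (norm_nonneg t), conjTranspose_mul, ← hDTD, ← hUAU]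
  simp only [Matrix.mul_assoc]
end

section
/- If A is an n×n complex matrix that is normal (i.e., A*A = AA*, where A* is the conjugate transpose), then the numerical range W(A) equals the convex hull (over ℝ) of the set of eigenvalues of A, i.e., W(A) = convexHull(spectrum of A in ℂ). -/
open scoped Matrix

/-!
A normal operator `T = ℜ T + i ℑ T` has commuting self-adjoint parts, hence an orthonormal basis
`(bᵢ)` of joint eigenvectors, and so of eigenvectors of `T` with eigenvalues `μᵢ`. In that basis
`⟪x, T x⟫ = ∑ᵢ ‖⟪bᵢ, x⟫‖² μᵢ`, and as `x` runs over the unit sphere the weights `‖⟪bᵢ, x⟫‖²` run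
over the whole standard simplex. So the numerical range is exactly the set of convex combinations
of the `μᵢ`, which are the eigenvalues of `T`.
-/

open Set Module.End
open scoped InnerProductSpace

theorem convexHull_range_eq_image_stdSimplex {ι E : Type*} [Fintype ι] [AddCommGroup E]
    [Module ℝ E] (v : ι → E) :
    convexHull ℝ (range v) = (fun w : ι → ℝ ↦ ∑ i, w i • v i) '' stdSimplex ℝ ι := by
  classical
  simp_rw [← Fintype.linearCombination_apply ℝ v, ← convexHull_rangle_single_eq_stdSimplex,
    LinearMap.image_convexHull, ← range_comp]
  congr 2 with i
  simp [Fintype.linearCombination_apply_single]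

theorem Module.End.spectrum_eq_range_of_basis_eigenvectors {ι K V : Type*} [Fintype ι]
    [DecidableEq ι] [Field K] [AddCommGroup V] [Module K V] (b : Basis ι K V) {T : End K V}
    {μ : ι → K} (hμ : ∀ i, T (b i) = μ i • b i) :
    spectrum K T = range μ := by
  have hT : LinearMap.toMatrix b b T = Matrix.diagonal μ := by
    ext i j
    rw [LinearMap.toMatrix_apply, hμ, map_smul, b.repr_self, Matrix.diagonal_apply]
    by_cases h : i = j <;> simp [h]
  rw [← LinearMap.spectrum_toMatrix T b, hT, spectrum_diagonal]

theorem LinearMap.IsSymmetric.exists_orthonormalBasis_eigenvectors_of_commute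
    {𝕜 E : Type*} [RCLike 𝕜] [NormedAddCommGroup E] [InnerProductSpace 𝕜 E]
    [FiniteDimensional 𝕜 E] {n : ℕ} (hn : Module.finrank 𝕜 E = n) {B C : E →ₗ[𝕜] E}
    (hB : B.IsSymmetric) (hC : C.IsSymmetric) (hBC : Commute B C) :
    ∃ (b : OrthonormalBasis (Fin n) 𝕜 E) (β γ : Fin n → 𝕜),
      ∀ i, B (b i) = β i • b i ∧ C (b i) = γ i • b i := by
  classical
  let V : 𝕜 × 𝕜 → Submodule 𝕜 E := fun μ ↦ eigenspace B μ.2 ⊓ eigenspace C μ.1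
  have hV : DirectSum.IsInternal V := hB.directSum_isInternal_of_commute hC hBC
  -- `subordinateOrthonormalBasis` needs a finite index type: keep only the nonzero `V μ`.
  let _ : Fintype {μ // V μ ≠ ⊥} := hV.submodule_iSupIndep.fintypeNeBotOfFiniteDimensional
  let W : {μ // V μ ≠ ⊥} → Submodule 𝕜 E := fun μ ↦ V μ
  have hW : DirectSum.IsInternal W := by
    rw [DirectSum.isInternal_submodule_iff_iSupIndep_and_iSup_eq_top]
    refine ⟨hV.submodule_iSupIndep.comp Subtype.coe_injective, ?_⟩
    rw [iSup_ne_bot_subtype V]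
    exact hV.submodule_iSup_eq_top
  have hWorth : OrthogonalFamily 𝕜 (fun μ ↦ W μ) fun μ ↦ (W μ).subtypeₗᵢ := fun μ ν hμν ↦
    hB.orthogonalFamily_eigenspace_inf_eigenspace hC (Subtype.coe_injective.ne hμν)
  let μ := fun i ↦ (hW.subordinateOrthonormalBasisIndex hn i hWorth).1
  refine ⟨hW.subordinateOrthonormalBasis hn hWorth, fun i ↦ (μ i).2, fun i ↦ (μ i).1,
    fun i ↦ ?_⟩
  have hi := hW.subordinateOrthonormalBasis_subordinate hn i hWorth
  exact ⟨mem_eigenspace_iff.mp hi.1, mem_eigenspace_iff.mp hi.2⟩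

theorem LinearMap.exists_orthonormalBasis_eigenvectors_of_isStarNormal
    {E : Type*} [NormedAddCommGroup E] [InnerProductSpace ℂ E] [FiniteDimensional ℂ E] {n : ℕ}
    (hn : Module.finrank ℂ E = n) (T : E →ₗ[ℂ] E) [IsStarNormal T] :
    ∃ (b : OrthonormalBasis (Fin n) ℂ E) (μ : Fin n → ℂ), ∀ i, T (b i) = μ i • b i := by
  obtain ⟨b, β, γ, hb⟩ :=
    LinearMap.IsSymmetric.exists_orthonormalBasis_eigenvectors_of_commute hn
      ((isSymmetric_iff_isSelfAdjoint _).mpr (realPart T).2)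
      ((isSymmetric_iff_isSelfAdjoint _).mpr (imaginaryPart T).2)
      (Commute.realPart_imaginaryPart T)
  refine ⟨b, fun i ↦ β i + Complex.I * γ i, fun i ↦ ?_⟩
  conv_lhs => rw [← realPart_add_I_smul_imaginaryPart T]
  rw [LinearMap.add_apply, LinearMap.smul_apply, (hb i).1, (hb i).2, smul_smul, add_smul]

theorem Matrix.isStarNormal_toEuclideanLin {𝕜 n : Type*} [RCLike 𝕜] [Fintype n] [DecidableEq n]
    {A : Matrix n n 𝕜} (hA : Aᴴ * A = A * Aᴴ) : IsStarNormal (toEuclideanLin A) := by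
  rw [isStarNormal_iff, commute_iff_eq, LinearMap.star_eq_adjoint,
    ← toEuclideanLin_conjTranspose_eq_adjoint, Module.End.mul_eq_comp, Module.End.mul_eq_comp,
    ← toLpLin_mul_same, ← toLpLin_mul_same, hA]

section Eigenbasis

variable {𝕜 E ι : Type*} [RCLike 𝕜] [NormedAddCommGroup E] [InnerProductSpace 𝕜 E] [Fintype ι]

theorem OrthonormalBasis.image_sphere_sq_norm_inner (b : OrthonormalBasis ι 𝕜 E) :
    (fun x i ↦ ‖⟪b i, x⟫_𝕜‖ ^ 2) '' Metric.sphere 0 1 = stdSimplex ℝ ι := by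
  ext w
  constructor
  · rintro ⟨x, hx, rfl⟩
    refine ⟨fun i ↦ by positivity, ?_⟩
    rw [b.sum_sq_norm_inner_right, mem_sphere_zero_iff_norm.mp hx, one_pow]
  · rintro ⟨hw₀, hw₁⟩
    set x := b.repr.symm (WithLp.toLp 2 fun i ↦ (√(w i) : 𝕜))
    have hx : ∀ i, ‖⟪b i, x⟫_𝕜‖ ^ 2 = w i := fun i ↦ by
      rw [← b.repr_apply_apply, LinearIsometryEquiv.apply_symm_apply, RCLike.norm_ofReal,
        sq_abs, Real.sq_sqrt (hw₀ i)]
    refine ⟨x, ?_, funext hx⟩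
    rw [mem_sphere_zero_iff_norm, ← pow_eq_one_iff_of_nonneg (norm_nonneg x) two_ne_zero,
      ← b.sum_sq_norm_inner_right]
    simp only [hx, hw₁]

variable {T : E →ₗ[𝕜] E} {b : OrthonormalBasis ι 𝕜 E} {μ : ι → 𝕜}

theorem inner_self_apply_eq_sum_of_orthonormalBasis_eigenvectors
    (hμ : ∀ i, T (b i) = μ i • b i) (x : E) :
    ⟪x, T x⟫_𝕜 = ∑ i, ‖⟪b i, x⟫_𝕜‖ ^ 2 • μ i := by
  nth_rw 2 [← b.sum_repr' x]
  simp only [map_sum, map_smul, hμ, inner_sum, inner_smul_right]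
  refine Finset.sum_congr rfl fun i _ ↦ ?_
  rw [← inner_conj_symm x, RCLike.real_smul_eq_coe_mul, RCLike.ofReal_pow, ← RCLike.mul_conj]
  ring

theorem image_sphere_inner_self_apply_of_orthonormalBasis_eigenvectors
    (hμ : ∀ i, T (b i) = μ i • b i) :
    (fun x ↦ ⟪x, T x⟫_𝕜) '' Metric.sphere 0 1 = convexHull ℝ (range μ) := by
  rw [convexHull_range_eq_image_stdSimplex, ← b.image_sphere_sq_norm_inner, image_image]
  simp only [inner_self_apply_eq_sum_of_orthonormalBasis_eigenvectors hμ]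

end Eigenbasis

/-- The numerical range of a normal matrix is the convex hull of its eigenvalues. -/
theorem numRange_normal (n : ℕ) (A : Matrix (Fin n) (Fin n) ℂ)
    (hA : Aᴴ * A = A * Aᴴ) :
    numRange A = convexHull ℝ (spectrum ℂ A) := by
  have := Matrix.isStarNormal_toEuclideanLin hA
  obtain ⟨b, μ, hμ⟩ :=
    (Matrix.toEuclideanLin A).exists_orthonormalBasis_eigenvectors_of_isStarNormal
      finrank_euclideanSpace_fin
  rw [← Matrix.spectrum_toLpLin 2,
    spectrum_eq_range_of_basis_eigenvectors b.toBasis (by simpa only [b.coe_toBasis] using hμ),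
    ← image_sphere_inner_self_apply_of_orthonormalBasis_eigenvectors hμ]
  ext z
  simp [numRange, eq_comm]
end

section
/- Let H be a complex Hilbert space and let A be a bounded linear operator on H that is normal (A*A = AA*). Then the closure of the numerical range of A equals the convex hull (over ℝ) of the spectrum of A: closure(W(A)) = convexHull(σ(A)). -/
/-!
`⊆`: if a half-plane `re (c z) ≤ t` contains `σ(A)`, spectral mapping for the normal operator
`c • A` gives `ℜ (c • A) ≤ t` as operators, so the half-plane also contains `W(A)`. Since `ℂ` is
finite-dimensional, the convex hull of the compact set `σ(A)` is compact, hence by Hahn–Banach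
the intersection of such half-planes.

`⊇`: the functional calculus applied to bump functions with disjoint supports around distinct
points `μᵢ ∈ σ(A)` yields orthonormal vectors `vᵢ` with `A vᵢ ≈ μᵢ vᵢ`; the unit vector
`x = ∑ √wᵢ vᵢ` then has `⟪x, A x⟫ ≈ ∑ wᵢ μᵢ`.
-/

/-- The numerical range of a bounded linear operator `A` on a complex Hilbert space:
`W(A) = {⟨A x, x⟩ : x ∈ H, ‖x‖ = 1}`. -/
noncomputable def opNumRange {H : Type*} [NormedAddCommGroup H] [InnerProductSpace ℂ H]
    (A : H →L[ℂ] H) : Set ℂ :=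
  {z : ℂ | ∃ x : H, ‖x‖ = 1 ∧ z = (inner ℂ x (A x) : ℂ)}

theorem IsCompact.convexHull {E : Type*} [AddCommGroup E] [Module ℝ E] [TopologicalSpace E]
    [ContinuousAdd E] [ContinuousSMul ℝ E] [FiniteDimensional ℝ E] {s : Set E}
    (hs : IsCompact s) : IsCompact (convexHull ℝ s) := by
  let K : ℕ → Set E := fun k => (fun q : (Fin k → ℝ) × (Fin k → E) => ∑ i, q.1 i • q.2 i) ''
    (stdSimplex ℝ (Fin k) ×ˢ Set.univ.pi fun _ => s)
  have hK : ∀ k, K k ⊆ _root_.convexHull ℝ s := by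
    rintro k _ ⟨⟨w, p⟩, ⟨⟨hw₀, hw₁⟩, hp⟩, rfl⟩
    exact (convex_convexHull ℝ s).sum_mem (fun i _ => hw₀ i) hw₁
      fun i _ => subset_convexHull ℝ s (hp i trivial)
  have hcarath : _root_.convexHull ℝ s = ⋃ k ∈ Finset.range (Module.finrank ℝ E + 2), K k := by
    refine (Set.iUnion₂_subset fun k _ => hK k).antisymm' fun x hx => ?_
    obtain ⟨ι, _, z, w, hzs, hz, hw₀, hw₁, rfl⟩ := eq_pos_convex_span_of_mem_convexHull hx
    have hcard : Fintype.card ι < Module.finrank ℝ E + 2 := by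
      have := Submodule.finrank_le (vectorSpan ℝ (Set.range z))
      have := hz.card_le_finrank_succ
      omega
    let e := (Fintype.equivFin ι).symm
    refine Set.mem_iUnion₂.2 ⟨_, Finset.mem_range.2 hcard, (w ∘ e, z ∘ e),
      ⟨⟨fun i => (hw₀ _).le, ?_⟩, fun i _ => hzs (Set.mem_range_self _)⟩,
      e.sum_comp fun i => w i • z i⟩
    simpa [e.sum_comp] using hw₁
  rw [hcarath]
  exact (Finset.range _).finite_toSet.isCompact_biUnion fun k _ =>
    ((isCompact_stdSimplex ℝ (Fin k)).prod (isCompact_univ_pi fun _ => hs)).image (by fun_prop)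

theorem Finset.exists_pos_forall_le_dist {α : Type*} [MetricSpace α] (u : Finset α) :
    ∃ δ > 0, ∀ x ∈ u, ∀ y ∈ u, x ≠ y → δ ≤ dist x y := by
  rcases u.offDiag.eq_empty_or_nonempty with h | h
  · refine ⟨1, one_pos, fun x hx y hy hxy => ?_⟩
    simpa [h] using (mem_offDiag (x := (x, y))).2 ⟨hx, hy, hxy⟩
  · obtain ⟨p, hp, hmin⟩ := u.offDiag.exists_min_image (fun p => dist p.1 p.2) h
    exact ⟨_, dist_pos.2 (mem_offDiag.1 hp).2.2, fun x hx y hy hxy =>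
      hmin (x, y) (mem_offDiag.2 ⟨hx, hy, hxy⟩)⟩

section

open ContinuousLinearMap Complex
open scoped InnerProductSpace ComplexConjugate ComplexStarModule

variable {H : Type*} [NormedAddCommGroup H] [InnerProductSpace ℂ H]

theorem exists_mem_opNumRange_dist_le {ι : Type*} [Fintype ι] (A : H →L[ℂ] H) {v : ι → H}
    (hv : Orthonormal ℂ v) {p : ι → ℂ} {ε : ℝ} (hAv : ∀ i, ‖A (v i) - p i • v i‖ ≤ ε)
    {w : ι → ℝ} (hw₀ : ∀ i, 0 ≤ w i) (hw₁ : ∑ i, w i = 1) :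
    ∃ q ∈ opNumRange A, dist q (∑ i, w i • p i) ≤ Fintype.card ι * ε := by
  set s : ι → ℂ := fun i => (√(w i) : ℂ)
  have hs : ∀ i, conj (s i) * s i = w i := fun i => by
    simp only [s, conj_ofReal, ← ofReal_mul, Real.mul_self_sqrt (hw₀ i)]
  set x := ∑ i, s i • v i
  have hx : ‖x‖ = 1 := by
    have : ⟪x, x⟫_ℂ = 1 := by simp_rw [x, hv.inner_sum, hs, ← ofReal_sum, hw₁, ofReal_one]
    refine (pow_eq_one_iff_of_nonneg (norm_nonneg x) two_ne_zero).1 ?_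
    rw [← inner_self_eq_norm_sq (𝕜 := ℂ), this, RCLike.one_re]
  have hAx : ‖A x - ∑ i, (s i * p i) • v i‖ ≤ Fintype.card ι * ε := by
    have hsle : ∀ i, ‖s i‖ ≤ 1 := fun i => by
      rw [norm_real, Real.norm_of_nonneg (Real.sqrt_nonneg _), Real.sqrt_le_one]
      exact hw₁ ▸ Finset.single_le_sum (fun j _ => hw₀ j) (Finset.mem_univ i)
    calc ‖A x - ∑ i, (s i * p i) • v i‖ = ‖∑ i, s i • (A (v i) - p i • v i)‖ := by
          simp only [x, map_sum, map_smul, smul_sub, mul_smul, Finset.sum_sub_distrib]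
      _ ≤ ∑ i, ‖s i‖ * ‖A (v i) - p i • v i‖ := norm_sum_le_of_le _ fun i _ => (norm_smul _ _).le
      _ ≤ ∑ _i : ι, 1 * ε := Finset.sum_le_sum fun i _ =>
          mul_le_mul (hsle i) (hAv i) (norm_nonneg _) zero_le_one
      _ = Fintype.card ι * ε := by simp
  refine ⟨_, ⟨x, hx, rfl⟩, ?_⟩
  have hsum : ⟪x, ∑ i, (s i * p i) • v i⟫_ℂ = ∑ i, w i • p i := by
    simp_rw [x, hv.inner_sum, ← mul_assoc, hs, real_smul]
  calc dist ⟪x, A x⟫_ℂ (∑ i, w i • p i) = ‖⟪x, A x - ∑ i, (s i * p i) • v i⟫_ℂ‖ := by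
        rw [dist_eq_norm, inner_sub_right, hsum]
    _ ≤ ‖x‖ * ‖A x - ∑ i, (s i * p i) • v i‖ := norm_inner_le_norm _ _
    _ ≤ Fintype.card ι * ε := by rw [hx, one_mul]; exact hAx

variable [CompleteSpace H]

theorem re_inner_apply_le_of_forall_re_le (A : H →L[ℂ] H) [IsStarNormal A] {M : ℝ}
    (hM : ∀ z ∈ spectrum ℂ A, z.re ≤ M) (x : H) : re ⟪x, A x⟫_ℂ ≤ M * ‖x‖ ^ 2 := by
  have hle : (ℜ A : H →L[ℂ] H) ≤ algebraMap ℝ _ M :=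
    le_algebraMap_of_spectrum_le (by simpa [spectrum_realPart' A] using hM) (ℜ A).2
  have hre : re ⟪x, (ℜ A : H →L[ℂ] H) x⟫_ℂ = re ⟪x, A x⟫_ℂ := by
    rw [realPart_apply_coe, star_eq_adjoint, smul_apply, inner_smul_right_eq_smul, add_apply,
      inner_add_right, adjoint_inner_right, smul_re, add_re, ← inner_conj_symm, conj_re]
    ring
  have halg : re ⟪x, algebraMap ℝ (H →L[ℂ] H) M x⟫_ℂ = M * ‖x‖ ^ 2 := by
    rw [Algebra.algebraMap_eq_smul_one, smul_apply, one_apply_eq_self, inner_smul_right_eq_smul,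
      smul_re, inner_self_eq_norm_sq_to_K]
    norm_cast
  have := hle.re_inner_nonneg_right x
  rw [sub_apply, inner_sub_right, map_sub, RCLike.re_to_complex, RCLike.re_to_complex, hre,
    halg] at this
  linarith

theorem opNumRange_subset_convexHull_spectrum (A : H →L[ℂ] H) [IsStarNormal A] :
    opNumRange A ⊆ convexHull ℝ (spectrum ℂ A) := by
  rintro _ ⟨x, hx, rfl⟩
  by_contra hnot
  obtain ⟨f, t, hft, htf⟩ := geometric_hahn_banach_closed_point (convex_convexHull ℝ _)
    (spectrum.isCompact A).convexHull.isClosed hnot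
  set c := conj ((InnerProductSpace.toDual ℝ ℂ).symm f)
  have hf : ∀ z, f z = (c * z).re := fun z => by
    rw [← InnerProductSpace.toDual_symm_apply, Complex.inner, mul_comm]
  have hspec : ∀ z ∈ spectrum ℂ (c • A), z.re ≤ t := by
    rw [← cfc_const_mul_id c A, cfc_map_spectrum ..]
    rintro _ ⟨z, hz, rfl⟩
    exact (hf z ▸ hft z (subset_convexHull ℝ _ hz)).le
  have := re_inner_apply_le_of_forall_re_le (c • A) hspec x
  rw [smul_apply, inner_smul_right, hx, ← hf] at this
  linarith

theorem inner_cfc_apply_cfc_apply_eq_zero (A : H →L[ℂ] H) [IsStarNormal A] {f g : ℂ → ℂ}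
    (hf : ContinuousOn f (spectrum ℂ A)) (hg : ContinuousOn g (spectrum ℂ A))
    (hfg : ∀ z ∈ spectrum ℂ A, f z = 0 ∨ g z = 0) (x y : H) :
    ⟪cfc f A x, cfc g A y⟫_ℂ = 0 := by
  have hprod : cfc (fun z => star (f z) * g z) A = 0 := by
    refine (cfc_congr fun z hz => ?_).trans (cfc_zero ℂ A)
    rcases hfg z hz with h | h <;> simp [h]
  rw [← adjoint_inner_right, ← star_eq_adjoint, ← cfc_star, ← mul_apply_eq_comp, ← cfc_mul ..,
    hprod, zero_apply, inner_zero_right]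

theorem exists_approx_eigenvector_mem_range_cfc (A : H →L[ℂ] H) [IsStarNormal A] {f : ℂ → ℂ}
    (hf : ContinuousOn f (spectrum ℂ A)) {μ : ℂ} (hμ : μ ∈ spectrum ℂ A) (hfμ : f μ = 1)
    {r : ℝ} (hr : ∀ z ∈ spectrum ℂ A, ‖(z - μ) * f z‖ ≤ r) :
    ∃ y, ‖cfc f A y‖ = 1 ∧ ‖A (cfc f A y) - μ • cfc f A y‖ ≤ 2 * r := by
  set T := cfc f A
  have hT : 1 ≤ ‖T‖ := by
    have : (1 : ℂ) ∈ spectrum ℂ T := by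
      rw [cfc_map_spectrum f A]
      exact ⟨μ, hμ, hfμ⟩
    calc 1 ≤ ‖T‖ * ‖(1 : H →L[ℂ] H)‖ := by simpa using spectrum.norm_le_norm_mul_of_mem this
      _ ≤ ‖T‖ := mul_le_of_le_one_right (norm_nonneg _) norm_id_le
  have hr₀ : 0 ≤ r := (norm_nonneg _).trans (hr μ hμ)
  have hAT : ‖(A - algebraMap ℂ _ μ) * T‖ ≤ r := by
    have : (A - algebraMap ℂ _ μ) * T = cfc (fun z => (z - μ) * f z) A := by
      rw [cfc_mul .., cfc_sub .., cfc_id' .., cfc_const ..]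
    rw [this]
    exact norm_cfc_le hr₀ hr
  obtain ⟨y₀, hy₀, hTy₀⟩ := T.exists_lt_apply_of_lt_opNorm (r := 2⁻¹) (by linarith)
  have hn : 0 < ‖T y₀‖ := by linarith
  set y := (‖T y₀‖⁻¹ : ℂ) • y₀
  have hy : ‖y‖ ≤ 2 := by
    rw [norm_smul, norm_inv, norm_real, norm_norm, inv_mul_le_iff₀ hn]
    linarith
  refine ⟨y, ?_, ?_⟩
  · rw [map_smul, norm_smul, norm_inv, norm_real, norm_norm, inv_mul_cancel₀ hn.ne']
  · calc ‖A (T y) - μ • T y‖ = ‖((A - algebraMap ℂ _ μ) * T) y‖ := by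
          simp [Algebra.algebraMap_eq_smul_one]
      _ ≤ r * 2 := (le_opNorm _ _).trans (mul_le_mul hAT hy (norm_nonneg _) hr₀)
      _ = 2 * r := mul_comm _ _

theorem exists_orthonormal_approx_eigenvectors (A : H →L[ℂ] H) [IsStarNormal A] (u : Finset ℂ)
    (hu : ↑u ⊆ spectrum ℂ A) {ε : ℝ} (hε : 0 < ε) :
    ∃ v : u → H, Orthonormal ℂ v ∧ ∀ μ : u, ‖A (v μ) - (μ : ℂ) • v μ‖ ≤ ε := by
  obtain ⟨δ, hδ, hsep⟩ := u.exists_pos_forall_le_dist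
  set r := min (δ / 2) (ε / 2)
  have hr : 0 < r := by positivity
  let φ : ∀ μ : ℂ, ContDiffBump μ := fun μ => ⟨r / 2, r, half_pos hr, half_lt_self hr⟩
  have hφ : ∀ μ, ContinuousOn (fun z => (φ μ z : ℂ)) (spectrum ℂ A) := fun μ =>
    (continuous_ofReal.comp (φ μ).continuous).continuousOn
  have hφ_le : ∀ μ z, ‖(z - μ) * (φ μ z : ℂ)‖ ≤ r := by
    intro μ z
    rw [norm_mul, norm_real, Real.norm_of_nonneg (φ μ).nonneg, ← dist_eq_norm]
    rcases lt_or_ge (dist z μ) r with h | h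
    · exact (mul_le_mul h.le (φ μ).le_one (φ μ).nonneg hr.le).trans_eq (mul_one r)
    · rw [(φ μ).zero_of_le_dist h, mul_zero]
      exact hr.le
  have hφ_lt : ∀ μ z, (φ μ z : ℂ) ≠ 0 → dist z μ < r := fun μ z h =>
    lt_of_not_ge fun h' => h (by rw [(φ μ).zero_of_le_dist h', ofReal_zero])
  choose y hy₁ hy₂ using fun μ : u => exists_approx_eigenvector_mem_range_cfc A (hφ μ) (hu μ.2)
    (by rw [(φ μ).one_of_mem_closedBall (Metric.mem_closedBall_self (half_pos hr).le),
      ofReal_one]) fun z _ => hφ_le μ z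
  refine ⟨fun μ => cfc (fun z => (φ μ z : ℂ)) A (y μ), ⟨hy₁, fun μ ν hμν => ?_⟩,
    fun μ => (hy₂ μ).trans (by linarith [min_le_right (δ / 2) (ε / 2)])⟩
  refine inner_cfc_apply_cfc_apply_eq_zero A (hφ μ) (hφ ν) (fun z _ => ?_) _ _
  by_contra! h
  have := hsep μ μ.2 ν ν.2 (Subtype.val_injective.ne hμν)
  linarith [dist_triangle_left (μ : ℂ) ν z, hφ_lt μ z h.1, hφ_lt ν z h.2,
    min_le_left (δ / 2) (ε / 2)]

theorem convexHull_spectrum_subset_closure_opNumRange (A : H →L[ℂ] H) [IsStarNormal A] :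
    convexHull ℝ (spectrum ℂ A) ⊆ closure (opNumRange A) := by
  intro z hz
  rw [convexHull_eq_union_convexHull_finite_subsets, Set.mem_iUnion₂] at hz
  obtain ⟨u, hu, hzu⟩ := hz
  obtain ⟨w, hw₀, hw₁, rfl⟩ := Finset.mem_convexHull'.1 hzu
  refine Metric.mem_closure_iff.2 fun ε hε => ?_
  have hε' : 0 < ε / (u.card + 1) := by positivity
  obtain ⟨v, hv, hAv⟩ := exists_orthonormal_approx_eigenvectors A u hu hε'
  obtain ⟨q, hq, hqz⟩ := exists_mem_opNumRange_dist_le A hv hAv (w := fun μ => w μ)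
    (fun μ => hw₀ μ μ.2) (by rwa [Finset.sum_coe_sort u w])
  refine ⟨q, hq, ?_⟩
  rw [dist_comm, ← Finset.sum_coe_sort u]
  calc dist q (∑ μ : u, w μ • (μ : ℂ)) ≤ u.card * (ε / (u.card + 1)) := by
        simpa using hqz
    _ < ε := by
        rw [mul_div_assoc', div_lt_iff₀ (by positivity)]
        nlinarith

end

/-- The closure of the numerical range of a bounded normal operator on a complex Hilbert
space is the convex hull of its spectrum. -/
theorem closure_opNumRange_normal {H : Type*} [NormedAddCommGroup H] [InnerProductSpace ℂ H]
    [CompleteSpace H] (A : H →L[ℂ] H)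
    (hA : ContinuousLinearMap.adjoint A * A = A * ContinuousLinearMap.adjoint A) :
    closure (opNumRange A) = convexHull ℝ (spectrum ℂ A) := by
  have : IsStarNormal A := ⟨by rw [commute_iff_eq, ContinuousLinearMap.star_eq_adjoint, hA]⟩
  exact (closure_minimal (opNumRange_subset_convexHull_spectrum A)
    (spectrum.isCompact A).convexHull.isClosed).antisymm
    (convexHull_spectrum_subset_closure_opNumRange A)
end

section
/- Let n ≥ 1 and let J be the n×n nilpotent Jordan block, i.e., the matrix with J_{i,i+1} = 1 for 1 ≤ i ≤ n−1 and all other entries 0. Then the numerical range of J is the closed disk centered at 0 of radius cos(π/(n+1)): W(J) = { z ∈ ℂ : |z| ≤ cos(π/(n+1)) }. -/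
/-!
Pad `x ∈ ℂⁿ` with `xₙ = 0`; then `⟪x, J x⟫ = ∑ₖ conj xₖ xₖ₊₁`. With `θ = π / (n + 1)`, the sequence
`sₖ = sin (k θ)` is positive for `0 < k ≤ n`, vanishes at `0` and `n + 1`, and satisfies
`sₖ + sₖ₊₂ = 2 cos θ sₖ₊₁`. Bounding each `bₖ bₖ₊₁` by AM–GM with the weights `sₖ₊₂ / sₖ₊₁` and
telescoping gives `∑ bₖ bₖ₊₁ ≤ cos θ ∑ bₖ²`, with equality for `bₖ = sₖ₊₁`; so `W(J)` lies in
the disk and contains `cos θ`. Conversely `W(J)` is connected (the image of the unit sphere),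
contains `0`, and is invariant under `z ↦ u z` for `|u| = 1` (replace `xₖ` by `uᵏ xₖ`), hence is
the whole disk.
-/

open Finset Real Matrix
open scoped InnerProductSpace ComplexConjugate

theorem Finset.sum_range_succ_eq_of_boundary_zero {M : Type*} [AddCommMonoid M] {f : ℕ → M}
    {n : ℕ} (h0 : f 0 = 0) (hn : f n = 0) :
    ∑ k ∈ range n, f (k + 1) = ∑ k ∈ range n, f k := by
  have h := sum_range_succ' f n
  rw [sum_range_succ, hn, h0, add_zero, add_zero] at h
  exact h.symm

theorem two_mul_mul_le_sq_mul_div_add_sq_mul_div (x y : ℝ) {p q : ℝ} (hp : 0 < p) (hq : 0 < q) :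
    2 * (x * y) ≤ x ^ 2 * (p / q) + y ^ 2 * (q / p) := by
  have h : x ^ 2 * (p / q) + y ^ 2 * (q / p) - 2 * (x * y) = (x * p - y * q) ^ 2 / (p * q) := by
    field_simp
    ring
  linarith [div_nonneg (sq_nonneg (x * p - y * q)) (mul_pos hp hq).le]

section Recurrence

variable {n : ℕ} {c : ℝ} {s : ℕ → ℝ}

theorem sum_mul_succ_le_of_recurrence (hs0 : s 0 = 0) (hpos : ∀ k, 0 < k → k ≤ n → 0 < s k)
    (hsn : s (n + 1) = 0) (hrec : ∀ k < n, s k + s (k + 2) = 2 * c * s (k + 1))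
    {b : ℕ → ℝ} (hb : b n = 0) :
    ∑ k ∈ range n, b k * b (k + 1) ≤ c * ∑ k ∈ range n, b k ^ 2 := by
  have pair : ∀ k ∈ range n, 2 * (b k * b (k + 1)) ≤
      b k ^ 2 * (s (k + 2) / s (k + 1)) + b (k + 1) ^ 2 * (s (k + 1) / s (k + 2)) := by
    intro k hk
    rw [mem_range] at hk
    rcases Nat.lt_or_ge (k + 1) n with hlt | hge
    · exact two_mul_mul_le_sq_mul_div_add_sq_mul_div _ _ (hpos _ (by omega) hlt)
        (hpos _ (by omega) hk)
    · rw [show k + 1 = n by omega, hb, show k + 2 = n + 1 by omega, hsn]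
      simp
  have shift : ∑ k ∈ range n, b (k + 1) ^ 2 * (s (k + 1) / s (k + 2)) =
      ∑ k ∈ range n, b k ^ 2 * (s k / s (k + 1)) :=
    sum_range_succ_eq_of_boundary_zero (f := fun k => b k ^ 2 * (s k / s (k + 1)))
      (by simp [hs0]) (by simp [hb])
  have merge : ∀ k ∈ range n, b k ^ 2 * (s (k + 2) / s (k + 1)) + b k ^ 2 * (s k / s (k + 1)) =
      2 * c * b k ^ 2 := by
    intro k hk
    rw [mem_range] at hk
    have := hpos (k + 1) (by omega) hk
    rw [← mul_add, ← add_div, add_comm (s _), hrec k hk]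
    field_simp
  have := sum_le_sum pair
  rw [sum_add_distrib, shift, ← sum_add_distrib, sum_congr rfl merge, ← mul_sum, ← mul_sum] at this
  linarith

theorem sum_mul_succ_eq_of_recurrence (hs0 : s 0 = 0) (hsn : s (n + 1) = 0)
    (hrec : ∀ k < n, s k + s (k + 2) = 2 * c * s (k + 1)) :
    ∑ k ∈ range n, s (k + 1) * s (k + 2) = c * ∑ k ∈ range n, s (k + 1) ^ 2 := by
  have shift : ∑ k ∈ range n, s (k + 1) * s (k + 2) = ∑ k ∈ range n, s k * s (k + 1) :=
    sum_range_succ_eq_of_boundary_zero (f := fun k => s k * s (k + 1)) (by simp [hs0])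
      (by simp [hsn])
  have expand : ∑ k ∈ range n, (s k * s (k + 1) + s (k + 1) * s (k + 2)) =
      2 * c * ∑ k ∈ range n, s (k + 1) ^ 2 := by
    rw [mul_sum]
    refine sum_congr rfl fun k hk => ?_
    linear_combination s (k + 1) * hrec k (mem_range.mp hk)
  rw [sum_add_distrib, ← shift] at expand
  linarith

end Recurrence

section SineSequence

variable {n : ℕ}

theorem sin_nat_mul_pi_div_succ_pos {k : ℕ} (hk0 : 0 < k) (hkn : k ≤ n) :
    0 < sin (k * (π / (n + 1))) := by
  apply sin_pos_of_pos_of_lt_pi (by positivity)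
  have hk : (k : ℝ) < n + 1 := by exact_mod_cast Nat.lt_succ_of_le hkn
  calc k * (π / (n + 1)) < (n + 1) * (π / (n + 1)) := by gcongr
    _ = π := by field_simp

theorem sin_nat_succ_mul_pi_div_succ_eq_zero : sin (((n + 1 : ℕ) : ℝ) * (π / (n + 1))) = 0 := by
  rw [Nat.cast_succ, mul_div_cancel₀ _ (by positivity), sin_pi]

theorem sin_nat_mul_add_sin_nat_add_two_mul (θ : ℝ) (k : ℕ) :
    sin (k * θ) + sin ((k + 2 : ℕ) * θ) = 2 * cos θ * sin ((k + 1 : ℕ) * θ) := by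
  push_cast
  rw [show (k + 2 : ℝ) * θ = (k + 1) * θ + θ by ring, show (k : ℝ) * θ = (k + 1) * θ - θ by ring,
    sin_add, sin_sub]
  ring

theorem sum_mul_succ_le_cos_pi_div_succ_mul {b : ℕ → ℝ} (hb : b n = 0) :
    ∑ k ∈ range n, b k * b (k + 1) ≤ cos (π / (n + 1)) * ∑ k ∈ range n, b k ^ 2 :=
  sum_mul_succ_le_of_recurrence (s := fun k : ℕ => sin (k * (π / (n + 1)))) (by simp)
    (fun _ => sin_nat_mul_pi_div_succ_pos) sin_nat_succ_mul_pi_div_succ_eq_zero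
    (fun k _ => sin_nat_mul_add_sin_nat_add_two_mul _ k) hb

theorem sum_sin_mul_sin_succ_eq_cos_mul :
    ∑ k ∈ range n, sin ((k + 1 : ℕ) * (π / (n + 1))) * sin ((k + 2 : ℕ) * (π / (n + 1))) =
      cos (π / (n + 1)) * ∑ k ∈ range n, sin ((k + 1 : ℕ) * (π / (n + 1))) ^ 2 :=
  sum_mul_succ_eq_of_recurrence (s := fun k : ℕ => sin (k * (π / (n + 1)))) (by simp)
    sin_nat_succ_mul_pi_div_succ_eq_zero (fun k _ => sin_nat_mul_add_sin_nat_add_two_mul _ k)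

end SineSequence

section NumRange

variable {n : ℕ}

def extendByZero {α : Type*} [Zero α] (x : Fin n → α) (k : ℕ) : α :=
  if h : k < n then x ⟨k, h⟩ else 0

@[simp]
theorem extendByZero_val {α : Type*} [Zero α] (x : Fin n → α) (i : Fin n) :
    extendByZero x i = x i := by
  simp [extendByZero]

theorem extendByZero_of_le {α : Type*} [Zero α] (x : Fin n → α) {k : ℕ} (hk : n ≤ k) :
    extendByZero x k = 0 := by
  simp [extendByZero, hk.not_gt]

theorem sum_norm_extendByZero_sq (x : EuclideanSpace ℂ (Fin n)) :
    ∑ k ∈ range n, ‖extendByZero x k‖ ^ 2 = ‖x‖ ^ 2 := by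
  rw [EuclideanSpace.norm_sq_eq, ← Fin.sum_univ_eq_sum_range]
  simp

theorem numRange_eq_image (A : Matrix (Fin n) (Fin n) ℂ) :
    numRange A = (fun x => ⟪x, toEuclideanLin A x⟫_ℂ) '' Metric.sphere 0 1 := by
  ext z
  simp [numRange, eq_comm]

theorem isPreconnected_numRange (hn : 0 < n) (A : Matrix (Fin n) (Fin n) ℂ) :
    IsPreconnected (numRange A) := by
  have hrank : 1 < Module.rank ℝ (EuclideanSpace ℂ (Fin n)) := by
    rw [← Module.finrank_eq_rank, ← Module.finrank_mul_finrank ℝ ℂ, Complex.finrank_real_complex,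
      finrank_euclideanSpace_fin]
    norm_cast
    omega
  rw [numRange_eq_image]
  exact (isPreconnected_sphere hrank 0 1).image _ (by fun_prop)

theorem inner_div_norm_sq_mem_numRange (A : Matrix (Fin n) (Fin n) ℂ)
    {x : EuclideanSpace ℂ (Fin n)} (hx : x ≠ 0) :
    ⟪x, toEuclideanLin A x⟫_ℂ / (‖x‖ : ℂ) ^ 2 ∈ numRange A := by
  refine ⟨(‖x‖⁻¹ : ℂ) • x, ?_, ?_⟩
  · rw [norm_smul, norm_inv, Complex.norm_real, norm_norm,
      inv_mul_cancel₀ (norm_ne_zero_iff.mpr hx)]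
  · rw [map_smul, inner_smul_left, inner_smul_right, map_inv₀, Complex.conj_ofReal]
    field_simp

def jordanBlock (R : Type*) [Zero R] [One R] (n : ℕ) : Matrix (Fin n) (Fin n) R :=
  of fun i j => if (j : ℕ) = i + 1 then 1 else 0

theorem jordanBlock_mulVec_apply {R : Type*} [NonAssocSemiring R] (x : Fin n → R) (i : Fin n) :
    (jordanBlock R n *ᵥ x) i = extendByZero x (i + 1) := by
  have hsum := Fin.sum_univ_eq_sum_range
    (fun k => if k = (i : ℕ) + 1 then extendByZero x k else 0) n
  simp only [extendByZero_val, sum_ite_eq', mem_range] at hsum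
  simp only [jordanBlock, mulVec, dotProduct, of_apply, ite_mul, one_mul, zero_mul, hsum]
  split_ifs with hi
  · rfl
  · exact (extendByZero_of_le x (not_lt.mp hi)).symm

theorem inner_jordanBlock (x : EuclideanSpace ℂ (Fin n)) :
    ⟪x, toEuclideanLin (jordanBlock ℂ n) x⟫_ℂ =
      ∑ k ∈ range n, conj (extendByZero x k) * extendByZero x (k + 1) := by
  rw [toLpLin_apply, PiLp.inner_apply, ← Fin.sum_univ_eq_sum_range]
  simp [jordanBlock_mulVec_apply, mul_comm]

theorem norm_inner_jordanBlock_le (x : EuclideanSpace ℂ (Fin n)) :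
    ‖⟪x, toEuclideanLin (jordanBlock ℂ n) x⟫_ℂ‖ ≤ cos (π / (n + 1)) * ‖x‖ ^ 2 := by
  rw [inner_jordanBlock, ← sum_norm_extendByZero_sq]
  calc ‖∑ k ∈ range n, conj (extendByZero x k) * extendByZero x (k + 1)‖
      ≤ ∑ k ∈ range n, ‖extendByZero x k‖ * ‖extendByZero x (k + 1)‖ := by
        refine (norm_sum_le _ _).trans_eq (sum_congr rfl fun k _ => ?_)
        rw [norm_mul, Complex.norm_conj]
    _ ≤ _ := sum_mul_succ_le_cos_pi_div_succ_mul (b := fun k => ‖extendByZero x k‖)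
        (by simp [extendByZero_of_le])

theorem zero_mem_numRange_jordanBlock (hn : 0 < n) : 0 ∈ numRange (jordanBlock ℂ n) := by
  refine ⟨EuclideanSpace.single ⟨0, hn⟩ 1, by simp, ?_⟩
  rw [inner_jordanBlock, eq_comm]
  refine sum_eq_zero fun k _ => ?_
  simp [extendByZero, PiLp.single_apply, Fin.ext_iff]

theorem cos_mem_numRange_jordanBlock (hn : 0 < n) :
    (cos (π / (n + 1)) : ℂ) ∈ numRange (jordanBlock ℂ n) := by
  set s : ℕ → ℝ := fun k => sin (k * (π / (n + 1)))
  set v : EuclideanSpace ℂ (Fin n) := WithLp.toLp 2 fun i => (s (i + 1) : ℂ)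
  have hv : ∀ k ≤ n, extendByZero v k = s (k + 1) := by
    intro k hk
    rcases hk.lt_or_eq with hlt | rfl
    · simp [extendByZero, hlt, v]
    · rw [extendByZero_of_le _ le_rfl, eq_comm, Complex.ofReal_eq_zero]
      exact sin_nat_succ_mul_pi_div_succ_eq_zero
  have hnorm : ‖v‖ ^ 2 = ∑ k ∈ range n, s (k + 1) ^ 2 := by
    rw [← sum_norm_extendByZero_sq]
    refine sum_congr rfl fun k hk => ?_
    rw [hv k (mem_range.mp hk).le, Complex.norm_real, Real.norm_eq_abs, sq_abs]
  have hinner : ⟪v, toEuclideanLin (jordanBlock ℂ n) v⟫_ℂ =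
      ((∑ k ∈ range n, s (k + 1) * s (k + 2) : ℝ) : ℂ) := by
    rw [inner_jordanBlock, Complex.ofReal_sum]
    refine sum_congr rfl fun k hk => ?_
    rw [hv k (mem_range.mp hk).le, hv (k + 1) (mem_range.mp hk), Complex.conj_ofReal,
      Complex.ofReal_mul]
  have hv0 : v ≠ 0 := by
    intro h
    have := congrArg (fun w : EuclideanSpace ℂ (Fin n) => w ⟨0, hn⟩) h
    simp only [v, PiLp.zero_apply, Complex.ofReal_eq_zero] at this
    exact (sin_nat_mul_pi_div_succ_pos (k := 1) zero_lt_one hn).ne' this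
  have hcos : ∑ k ∈ range n, s (k + 1) * s (k + 2) =
      cos (π / (n + 1)) * ∑ k ∈ range n, s (k + 1) ^ 2 :=
    sum_sin_mul_sin_succ_eq_cos_mul
  have := inner_div_norm_sq_mem_numRange (jordanBlock ℂ n) hv0
  rwa [hinner, hcos, ← hnorm, Complex.ofReal_mul, Complex.ofReal_pow,
    mul_div_cancel_right₀ _ (by simpa using hv0)] at this

theorem mul_mem_numRange_jordanBlock {u z : ℂ} (hu : ‖u‖ = 1)
    (hz : z ∈ numRange (jordanBlock ℂ n)) :
    u * z ∈ numRange (jordanBlock ℂ n) := by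
  obtain ⟨x, hx, rfl⟩ := hz
  set y : EuclideanSpace ℂ (Fin n) := WithLp.toLp 2 fun i => u ^ (i : ℕ) * x i
  have hy : ∀ k, extendByZero y k = u ^ k * extendByZero x k := by
    intro k
    unfold extendByZero
    split_ifs <;> simp [y]
  have hconj : conj u * u = 1 := by
    rw [Complex.conj_mul', hu, Complex.ofReal_one, one_pow]
  refine ⟨y, ?_, ?_⟩
  · rw [← hx, EuclideanSpace.norm_eq, EuclideanSpace.norm_eq]
    simp [y, hu]
  · rw [inner_jordanBlock, inner_jordanBlock, mul_sum]
    refine sum_congr rfl fun k _ => ?_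
    rw [hy, hy, map_mul, map_pow, eq_comm]
    calc conj u ^ k * conj (extendByZero x k) * (u ^ (k + 1) * extendByZero x (k + 1))
        = (conj u * u) ^ k * (u * (conj (extendByZero x k) * extendByZero x (k + 1))) := by ring
      _ = _ := by rw [hconj, one_pow, one_mul]

theorem mem_numRange_jordanBlock_of_norm_eq {w z : ℂ} (hw : w ∈ numRange (jordanBlock ℂ n))
    (h : ‖z‖ = ‖w‖) : z ∈ numRange (jordanBlock ℂ n) := by
  rcases eq_or_ne w 0 with rfl | hw0
  · rw [norm_zero, norm_eq_zero] at h
    rwa [h]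
  · have hu : ‖z / w‖ = 1 := by rw [norm_div, h, div_self (norm_ne_zero_iff.mpr hw0)]
    simpa [div_mul_cancel₀ z hw0] using mul_mem_numRange_jordanBlock hu hw

end NumRange

/-- The numerical range of the `n × n` nilpotent Jordan block is the closed disk centered
at `0` of radius `cos (π / (n + 1))`. -/
theorem numRange_jordan_block (n : ℕ) (hn : 1 ≤ n) :
    numRange (Matrix.of fun i j : Fin n => if (j : ℕ) = (i : ℕ) + 1 then (1 : ℂ) else 0) =
      {z : ℂ | ‖z‖ ≤ Real.cos (Real.pi / (n + 1))} := by
  change numRange (jordanBlock ℂ n) = _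
  ext z
  constructor
  · rintro ⟨x, hx, rfl⟩
    simpa [hx] using norm_inner_jordanBlock_le x
  · intro hz
    have hcos : ‖(cos (π / (n + 1)) : ℂ)‖ = cos (π / (n + 1)) := by
      rw [Complex.norm_real, Real.norm_eq_abs, abs_of_nonneg ((norm_nonneg z).trans hz)]
    have hnorms : IsPreconnected (norm '' numRange (jordanBlock ℂ n)) :=
      (isPreconnected_numRange hn _).image _ continuous_norm.continuousOn
    obtain ⟨w, hw, hwz⟩ := hnorms.Icc_subset ⟨0, zero_mem_numRange_jordanBlock hn, norm_zero⟩
      ⟨_, cos_mem_numRange_jordanBlock hn, hcos⟩ ⟨norm_nonneg z, hz⟩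
    exact mem_numRange_jordanBlock_of_norm_eq hw hwz.symm
end

section
/- Let A be an n×n complex matrix with operator norm ‖A‖ ≤ 1. Define D_A = (I − AA*)^{1/2} and D_{A*} = (I − A*A)^{1/2}, the positive semidefinite square roots of the positive semidefinite matrices I − AA* and I − A*A. Then the 2n×2n block matrix U = [[A, D_A], [D_{A*}, −A*]] is unitary (and A is the top-left block of U, so U is a unitary dilation of A). -/
open scoped Matrix ComplexOrder MatrixOrder

/-! Blockwise, `U Uᴴ = 1` amounts to `D_A² = 1 - AAᴴ`, `D_{A*}² = 1 - AᴴA` and the intertwining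
relation `A D_{A*} = D_A A` together with its adjoint. The intertwining holds for the squares,
`A (1 - AᴴA) = (1 - AAᴴ) A`, and passes to the square roots because a positive semidefinite matrix
is the functional-calculus square root of its square, so it commutes with everything its square
commutes with. -/

namespace Matrix

variable {m n : Type*} [Fintype m] [Fintype n] [DecidableEq m] [DecidableEq n]

theorem PosSemidef.fromBlocks_zero {P : Matrix m m ℂ} {Q : Matrix n n ℂ}
    (hP : P.PosSemidef) (hQ : Q.PosSemidef) : (fromBlocks P 0 0 Q).PosSemidef := by
  obtain ⟨B, rfl⟩ := CStarAlgebra.nonneg_iff_eq_star_mul_self.mp hP.nonneg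
  obtain ⟨C, rfl⟩ := CStarAlgebra.nonneg_iff_eq_star_mul_self.mp hQ.nonneg
  simpa [star_eq_conjTranspose, fromBlocks_conjTranspose, fromBlocks_multiply] using
    posSemidef_conjTranspose_mul_self (fromBlocks B 0 0 C)

theorem PosSemidef.commute_of_commute_mul_self {P X : Matrix n n ℂ} (hP : P.PosSemidef)
    (h : Commute (P * P) X) : Commute P X := by
  rw [← CFC.sqrt_mul_self P hP.nonneg, CFC.sqrt_eq_cfc]
  exact h.cfc_nnreal _

/-- Block trick: `fromBlocks 0 0 X 0` commutes with the square of the psd matrix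
`fromBlocks Q 0 0 P`, hence with that matrix itself. -/
theorem PosSemidef.mul_eq_mul_of_mul_mul_self_eq {P : Matrix m m ℂ} {Q : Matrix n n ℂ}
    (hP : P.PosSemidef) (hQ : Q.PosSemidef) {X : Matrix m n ℂ}
    (h : X * (Q * Q) = P * P * X) : X * Q = P * X := by
  have hN := (hQ.fromBlocks_zero hP).commute_of_commute_mul_self
    (X := fromBlocks 0 0 X 0) (by simp [commute_iff_eq, fromBlocks_multiply, h])
  simpa [commute_iff_eq, fromBlocks_multiply, eq_comm] using congrArg toBlocks₂₁ hN.eq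

end Matrix

open Matrix in
theorem halmos_dilation_unitary_general (n : ℕ) (A : Matrix (Fin n) (Fin n) ℂ)
    (DA DAs : Matrix (Fin n) (Fin n) ℂ)
    (hDA : DA.PosSemidef) (hDA2 : DA * DA = 1 - A * Aᴴ)
    (hDAs : DAs.PosSemidef) (hDAs2 : DAs * DAs = 1 - Aᴴ * A) :
    Matrix.fromBlocks A DA DAs (-Aᴴ) ∈ Matrix.unitaryGroup (Fin n ⊕ Fin n) ℂ := by
  have hA_DAs : A * DAs = DA * A :=
    hDA.mul_eq_mul_of_mul_mul_self_eq hDAs (by rw [hDA2, hDAs2]; noncomm_ring)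
  have hAstar_DA : Aᴴ * DA = DAs * Aᴴ := by
    simpa [hDA.1.eq, hDAs.1.eq] using congrArg conjTranspose hA_DAs.symm
  rw [mem_unitaryGroup_iff, star_eq_conjTranspose, fromBlocks_conjTranspose, hDA.1.eq,
    hDAs.1.eq, conjTranspose_neg, conjTranspose_conjTranspose, fromBlocks_multiply,
    ← fromBlocks_one]
  congr 1
  · rw [hDA2]; abel
  · rw [hA_DAs, mul_neg, add_neg_cancel]
  · rw [neg_mul, hAstar_DA, add_neg_cancel]
  · rw [hDAs2, neg_mul_neg]; abel

/-- Halmos's unitary dilation: if `‖A‖ ≤ 1` (operator norm on Euclidean space) and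
`D_A`, `D_{A*}` are the positive semidefinite square roots of `I - AA*` and `I - A*A`,
then the block matrix `U = [[A, D_A], [D_{A*}, -A*]]` is unitary. -/
theorem halmos_dilation_unitary (n : ℕ) (A : Matrix (Fin n) (Fin n) ℂ)
    (hA : ‖Matrix.toEuclideanCLM (𝕜 := ℂ) A‖ ≤ 1)
    (DA DAs : Matrix (Fin n) (Fin n) ℂ)
    (hDA : DA.PosSemidef) (hDA2 : DA * DA = 1 - A * Aᴴ)
    (hDAs : DAs.PosSemidef) (hDAs2 : DAs * DAs = 1 - Aᴴ * A) :
    Matrix.fromBlocks A DA DAs (-Aᴴ) ∈ Matrix.unitaryGroup (Fin n ⊕ Fin n) ℂ :=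
  halmos_dilation_unitary_general n A DA DAs hDA hDA2 hDAs hDAs2
end

section
/- Let a₁, …, aₙ ∈ ℂ with |a_j| < 1 for all j, and let λ ∈ ℂ with |λ| = 1. Define the (n+1)×(n+1) matrix U^λ by: U^λ_{ii} = a_i for 1 ≤ i ≤ n; U^λ_{ij} = (∏_{k=i+1}^{j−1} (−ā_k))·√(1−|a_i|²)·√(1−|a_j|²) for 1 ≤ i < j ≤ n (empty products equal 1); U^λ_{ij} = 0 for 1 ≤ j < i ≤ n; U^λ_{n+1,j} = λ·(∏_{k=1}^{j−1} (−ā_k))·√(1−|a_j|²) for 1 ≤ j ≤ n; U^λ_{i,n+1} = (∏_{k=i+1}^{n} (−ā_k))·√(1−|a_i|²) for 1 ≤ i ≤ n; and U^λ_{n+1,n+1} = λ·∏_{k=1}^{n} (−ā_k). Then U^λ is a unitary matrix. -/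
/-- The unitary 1-dilation `U^λ` of the compressed shift matrix associated with the finite
Blaschke product with zeros `a 0, …, a (n-1)` (indices here are 0-based; the entry
`U^λ_{ij}` of the statement, with 1-based indices, is `Ulam a λ (i-1) (j-1)`). -/
noncomputable def Ulam {n : ℕ} (a : Fin n → ℂ) (lam : ℂ) :
    Matrix (Fin (n + 1)) (Fin (n + 1)) ℂ :=
  Matrix.of fun i j =>
    if hi : (i : ℕ) < n then
      if hj : (j : ℕ) < n then
        if (i : ℕ) = (j : ℕ) then a ⟨i, hi⟩
        else if (i : ℕ) < (j : ℕ) then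
          (∏ k ∈ Finset.univ.filter (fun k : Fin n => (i : ℕ) < (k : ℕ) ∧ (k : ℕ) < (j : ℕ)),
              (-(starRingEnd ℂ) (a k))) *
            ((Real.sqrt (1 - ‖a ⟨i, hi⟩‖ ^ 2) : ℝ) : ℂ) *
            ((Real.sqrt (1 - ‖a ⟨j, hj⟩‖ ^ 2) : ℝ) : ℂ)
        else 0
      else
        (∏ k ∈ Finset.univ.filter (fun k : Fin n => (i : ℕ) < (k : ℕ)),
            (-(starRingEnd ℂ) (a k))) *
          ((Real.sqrt (1 - ‖a ⟨i, hi⟩‖ ^ 2) : ℝ) : ℂ)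
    else
      if hj : (j : ℕ) < n then
        lam * (∏ k ∈ Finset.univ.filter (fun k : Fin n => (k : ℕ) < (j : ℕ)),
            (-(starRingEnd ℂ) (a k))) *
          ((Real.sqrt (1 - ‖a ⟨j, hj⟩‖ ^ 2) : ℝ) : ℂ)
      else lam * ∏ k : Fin n, (-(starRingEnd ℂ) (a k))

/-!
Write `b_k = -conj a_k` and `c_k = √(1 - |a_k|²)` (`defect a_k`), and extend `a` by `a_n = 0`, so
that `b_n = 0` and `c_n = 1`. The vectors `w_s = ∑_{j ≥ s} b_s ⋯ b_{j-1} c_j e_j` (`tailVector`)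
satisfy `w_s = c_s e_s + b_s w_{s+1}`; row `i < n` of `U^λ` is `a_i e_i + c_i w_{i+1}` (`headRow`)
and the last row is `λ w_0`.

Since `e_s ⟂ w_{s+1}`, the recursion telescopes to `‖w_s‖² = 1 - ∏_{k ≥ s} |a_k|² = 1`. Hence
row `i` has norm `|a_i|² + c_i² = 1`, and it is orthogonal to `w_i = c_i e_i + b_i w_{i+1}` because
`(a_i, c_i) ⟂ (c_i, b_i)` in `ℂ²`. A later row `i'` is supported on `[i', n]`, where every `w_s`
with `s ≤ i'` is a multiple of `w_{i'}`; so it is orthogonal to all earlier rows.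
-/

open Finset ComplexConjugate

theorem Fin.prod_filter_val {M : Type*} [CommMonoid M] {n : ℕ} (f : ℕ → M) (p : ℕ → Prop)
    [DecidablePred p] :
    ∏ k ∈ univ.filter (fun k : Fin n => p k), f k = ∏ k ∈ (range n).filter p, f k := by
  rw [prod_filter, prod_filter, ← Fin.prod_univ_eq_prod_range (fun k => if p k then f k else 1)]

theorem Matrix.mem_unitaryGroup_of_orthonormal_rows {ι 𝕜 : Type*} [Fintype ι] [DecidableEq ι]
    [RCLike 𝕜] {U : Matrix ι ι 𝕜} (h : Orthonormal 𝕜 fun i => WithLp.toLp 2 (U i)) :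
    U ∈ Matrix.unitaryGroup ι 𝕜 := by
  rw [Matrix.mem_unitaryGroup_iff]
  ext i j
  rw [orthonormal_iff_ite] at h
  simpa [Matrix.mul_apply, Matrix.one_apply, PiLp.inner_apply, mul_comm, eq_comm] using h j i

namespace BlaschkeDilation

noncomputable def defect (z : ℂ) : ℂ := (Real.sqrt (1 - ‖z‖ ^ 2) : ℂ)

@[simp] lemma defect_zero : defect 0 = 1 := by simp [defect]

@[simp] lemma conj_defect (z : ℂ) : conj (defect z) = defect z := Complex.conj_ofReal _

lemma norm_defect_sq {z : ℂ} (hz : ‖z‖ ≤ 1) : ‖defect z‖ ^ 2 = 1 - ‖z‖ ^ 2 := by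
  rw [defect, Complex.norm_real, Real.norm_eq_abs, sq_abs,
    Real.sq_sqrt (by nlinarith [norm_nonneg z])]

noncomputable def tailVector (α : ℕ → ℂ) (m s : ℕ) : EuclideanSpace ℂ (Fin m) :=
  WithLp.toLp 2 fun j => if s ≤ (j : ℕ) then (∏ k ∈ Ico s j, -conj (α k)) * defect (α j) else 0

section tailVector

variable {α : ℕ → ℂ} {m : ℕ}

@[simp] lemma tailVector_apply (s : ℕ) (j : Fin m) :
    tailVector α m s j = if s ≤ (j : ℕ) then (∏ k ∈ Ico s j, -conj (α k)) * defect (α j) else 0 :=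
  rfl

lemma tailVector_of_le {s : ℕ} (hs : m ≤ s) : tailVector α m s = 0 := by
  ext j
  simp [show ¬ s ≤ (j : ℕ) by omega]

lemma tailVector_eq_add (s : Fin m) :
    tailVector α m s =
      defect (α s) • EuclideanSpace.single s 1 + (-conj (α s)) • tailVector α m (s + 1) := by
  ext j
  simp only [tailVector_apply, PiLp.add_apply, PiLp.smul_apply, PiLp.single_apply, smul_eq_mul]
  rcases lt_trichotomy (j : ℕ) s with h | h | h
  · simp [show ¬ (s : ℕ) ≤ j by omega, show j ≠ s by omega, show ¬ (s : ℕ) + 1 ≤ j by omega]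
  · simp [Fin.ext h]
  · rw [if_pos h.le, if_pos (Nat.succ_le_of_lt h), if_neg (Fin.ne_of_val_ne h.ne'),
      prod_eq_prod_Ico_succ_bot h]
    ring

lemma inner_single_tailVector {s : Fin m} {t : ℕ} (h : (s : ℕ) < t) :
    inner ℂ (EuclideanSpace.single s (1 : ℂ)) (tailVector α m t) = 0 := by
  simp [EuclideanSpace.inner_single_left, h.not_ge]

lemma norm_smul_single_add_smul_tailVector_sq (s : Fin m) (x y : ℂ) :
    ‖x • EuclideanSpace.single s 1 + y • tailVector α m (s + 1)‖ ^ 2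
      = ‖x‖ ^ 2 + ‖y‖ ^ 2 * ‖tailVector α m (s + 1)‖ ^ 2 := by
  rw [@norm_add_sq ℂ, inner_smul_left, inner_smul_right,
    inner_single_tailVector (Nat.lt_succ_self s), norm_smul, norm_smul, mul_pow, mul_pow]
  simp

lemma norm_tailVector_sq (hα : ∀ k, ‖α k‖ ≤ 1) {s : ℕ} (hs : s ≤ m) :
    ‖tailVector α m s‖ ^ 2 = 1 - ∏ k ∈ Ico s m, ‖α k‖ ^ 2 := by
  induction hs using Nat.decreasingInduction with
  | self => simp [tailVector_of_le le_rfl]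
  | of_succ s hs ih =>
    rw [tailVector_eq_add (α := α) ⟨s, hs⟩, norm_smul_single_add_smul_tailVector_sq, ih,
      norm_defect_sq (hα s), prod_eq_prod_Ico_succ_bot hs, norm_neg, RCLike.norm_conj]
    ring

lemma inner_tailVector_eq_prod_mul {s t : ℕ} (hst : s ≤ t) {x : EuclideanSpace ℂ (Fin m)}
    (hx : ∀ j : Fin m, (j : ℕ) < t → x j = 0) :
    inner ℂ (tailVector α m s) x = (∏ k ∈ Ico s t, -α k) * inner ℂ (tailVector α m t) x := by
  simp only [PiLp.inner_apply, mul_sum]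
  refine sum_congr rfl fun j _ => ?_
  by_cases hj : (j : ℕ) < t
  · simp [hx j hj]
  · push Not at hj
    simp only [tailVector_apply, hst.trans hj, hj, if_true, ← prod_Ico_consecutive _ hst hj,
      RCLike.inner_apply, map_mul, map_prod, map_neg, conj_defect, Complex.conj_conj]
    ring

end tailVector

noncomputable def headRow (α : ℕ → ℂ) (m : ℕ) (i : Fin m) : EuclideanSpace ℂ (Fin m) :=
  α i • EuclideanSpace.single i 1 + defect (α i) • tailVector α m (i + 1)

noncomputable def dilationRow (α : ℕ → ℂ) (lam : ℂ) (n : ℕ) (i : Fin (n + 1)) :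
    EuclideanSpace ℂ (Fin (n + 1)) :=
  if (i : ℕ) < n then headRow α (n + 1) i else lam • tailVector α (n + 1) 0

section rows

variable {α : ℕ → ℂ} {n : ℕ}

lemma headRow_apply_of_lt {m : ℕ} {i j : Fin m} (hji : j < i) : headRow α m i j = 0 := by
  simp [headRow, hji.ne, show ¬ (i : ℕ) + 1 ≤ j by omega]

lemma norm_tailVector (hα : ∀ k, ‖α k‖ ≤ 1) (hαn : α n = 0) {s : ℕ} (hs : s ≤ n) :
    ‖tailVector α (n + 1) s‖ = 1 := by
  have hprod : ∏ k ∈ Ico s (n + 1), ‖α k‖ ^ 2 = 0 :=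
    prod_eq_zero (mem_Ico.2 ⟨hs, n.lt_succ_self⟩) (by simp [hαn])
  rw [← pow_eq_one_iff_of_nonneg (norm_nonneg _) two_ne_zero,
    norm_tailVector_sq hα (by omega), hprod, sub_zero]

lemma norm_headRow (hα : ∀ k, ‖α k‖ ≤ 1) (hαn : α n = 0) {i : Fin (n + 1)} (hi : (i : ℕ) < n) :
    ‖headRow α (n + 1) i‖ = 1 := by
  rw [← pow_eq_one_iff_of_nonneg (norm_nonneg _) two_ne_zero, headRow,
    norm_smul_single_add_smul_tailVector_sq, norm_tailVector hα hαn hi, norm_defect_sq (hα i)]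
  ring

lemma inner_tailVector_headRow (hα : ∀ k, ‖α k‖ ≤ 1) (hαn : α n = 0) {i : Fin (n + 1)}
    (hi : (i : ℕ) < n) : inner ℂ (tailVector α (n + 1) i) (headRow α (n + 1) i) = 0 := by
  have he := inner_single_tailVector (α := α) (Nat.lt_succ_self i)
  rw [headRow, tailVector_eq_add i]
  simp only [inner_add_left, inner_add_right, inner_smul_left, inner_smul_right, he,
    inner_eq_zero_symm.1 he, inner_self_eq_norm_sq_to_K, norm_tailVector hα hαn hi,
    PiLp.norm_single, norm_one, conj_defect, map_neg, Complex.conj_conj]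
  push_cast
  ring

lemma inner_headRow_headRow_of_lt (hα : ∀ k, ‖α k‖ ≤ 1) (hαn : α n = 0) {i i' : Fin (n + 1)}
    (hii' : i < i') (hi' : (i' : ℕ) < n) :
    inner ℂ (headRow α (n + 1) i) (headRow α (n + 1) i') = 0 := by
  rw [headRow, inner_add_left, inner_smul_left, inner_smul_left, EuclideanSpace.inner_single_left,
    headRow_apply_of_lt hii', inner_tailVector_eq_prod_mul (t := i') hii'
      (fun j hj => headRow_apply_of_lt hj), inner_tailVector_headRow hα hαn hi']
  simp

lemma inner_headRow_tailVector_zero (hα : ∀ k, ‖α k‖ ≤ 1) (hαn : α n = 0) {i : Fin (n + 1)}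
    (hi : (i : ℕ) < n) : inner ℂ (headRow α (n + 1) i) (tailVector α (n + 1) 0) = 0 := by
  rw [inner_eq_zero_symm, inner_tailVector_eq_prod_mul (t := i) (Nat.zero_le _)
    (fun j hj => headRow_apply_of_lt hj), inner_tailVector_headRow hα hαn hi, mul_zero]

lemma inner_dilationRow_of_lt (hα : ∀ k, ‖α k‖ ≤ 1) (hαn : α n = 0) (lam : ℂ)
    {i i' : Fin (n + 1)} (hii' : i < i') :
    inner ℂ (dilationRow α lam n i) (dilationRow α lam n i') = 0 := by
  have hi : (i : ℕ) < n := by omega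
  unfold dilationRow
  rw [if_pos hi]
  split_ifs with hi'
  · exact inner_headRow_headRow_of_lt hα hαn hii' hi'
  · rw [inner_smul_right, inner_headRow_tailVector_zero hα hαn hi, mul_zero]

lemma orthonormal_dilationRow (hα : ∀ k, ‖α k‖ ≤ 1) (hαn : α n = 0) {lam : ℂ}
    (hlam : ‖lam‖ = 1) : Orthonormal ℂ (dilationRow α lam n) := by
  refine ⟨fun i => ?_, fun i i' hii' => ?_⟩
  · unfold dilationRow
    split_ifs with hi
    · exact norm_headRow hα hαn hi
    · rw [norm_smul, hlam, norm_tailVector hα hαn n.zero_le, one_mul]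
  · rcases hii'.lt_or_gt with h | h
    · exact inner_dilationRow_of_lt hα hαn lam h
    · exact inner_eq_zero_symm.1 (inner_dilationRow_of_lt hα hαn lam h)

end rows

def zeroExtend {M : Type*} [Zero M] {n : ℕ} (a : Fin n → M) (k : ℕ) : M :=
  if h : k < n then a ⟨k, h⟩ else 0

section zeroExtend

variable {n : ℕ}

@[simp] lemma zeroExtend_val {M : Type*} [Zero M] (a : Fin n → M) (k : Fin n) :
    zeroExtend a k = a k := by
  simp [zeroExtend]

@[simp] lemma zeroExtend_self {M : Type*} [Zero M] (a : Fin n → M) : zeroExtend a n = 0 := by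
  simp [zeroExtend]

lemma norm_zeroExtend_le {E : Type*} [SeminormedAddGroup E] (a : Fin n → E) {r : ℝ} (hr : 0 ≤ r)
    (ha : ∀ j, ‖a j‖ ≤ r) (k : ℕ) : ‖zeroExtend a k‖ ≤ r := by
  unfold zeroExtend
  split_ifs
  exacts [ha _, by simpa using hr]

lemma prod_filter_comp_eq_prod_Ico {M N : Type*} [Zero M] [CommMonoid N] (a : Fin n → M)
    (g : M → N) (p : ℕ → Prop) [DecidablePred p] (l u : ℕ) (hu : u ≤ n)
    (hp : ∀ k < n, p k ↔ l ≤ k ∧ k < u) :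
    ∏ k ∈ univ.filter (fun k : Fin n => p k), g (a k) = ∏ k ∈ Ico l u, g (zeroExtend a k) := by
  have hfilter : (range n).filter p = Ico l u := by
    ext k
    simp only [mem_filter, mem_range, mem_Ico]
    exact ⟨fun h => (hp k h.1).1 h.2, fun h => ⟨by omega, (hp k (by omega)).2 h⟩⟩
  rw [← hfilter, ← Fin.prod_filter_val]
  simp only [zeroExtend_val]

lemma defect_zeroExtend (a : Fin n → ℂ) {k : ℕ} (hk : k < n) :
    defect (zeroExtend a k) = (Real.sqrt (1 - ‖a ⟨k, hk⟩‖ ^ 2) : ℂ) := by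
  simp [defect, zeroExtend, hk]

end zeroExtend

lemma Ulam_apply {n : ℕ} (a : Fin n → ℂ) (lam : ℂ) (i j : Fin (n + 1)) :
    Ulam a lam i j = dilationRow (zeroExtend a) lam n i j := by
  have hprod := prod_filter_comp_eq_prod_Ico a (fun z => -conj z)
  have hn : ∀ k : Fin (n + 1), ¬ (k : ℕ) < n → (k : ℕ) = n := fun k hk => by omega
  simp only [Ulam, Matrix.of_apply, dilationRow]
  by_cases hi : (i : ℕ) < n
  · simp only [dif_pos hi, if_pos hi, headRow, PiLp.add_apply, PiLp.smul_apply, tailVector_apply,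
      PiLp.single_apply, smul_eq_mul, defect_zeroExtend a hi]
    by_cases hj : (j : ℕ) < n
    · rw [dif_pos hj]
      rcases lt_trichotomy (i : ℕ) j with hij | hij | hij
      · rw [hprod (fun k => (i : ℕ) < k ∧ k < j) (i + 1) j hj.le (fun k _ => by omega),
          defect_zeroExtend a hj, if_neg hij.ne, if_pos hij, if_neg (Fin.ne_of_val_ne hij.ne'),
          if_pos (Nat.succ_le_of_lt hij)]
        ring
      · simp [Fin.ext hij, zeroExtend, hj]
      · simp [Fin.ext_iff, hij.ne', hij.not_gt, hij.ne, show ¬ (i : ℕ) + 1 ≤ j by omega]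
    · rw [dif_neg hj, hprod (fun k => (i : ℕ) < k) (i + 1) n le_rfl (fun k _ => by omega),
        if_neg (Fin.ne_of_val_ne (by omega)), if_pos (by omega), hn j hj, zeroExtend_self,
        defect_zero]
      ring
  · simp only [dif_neg hi, if_neg hi, PiLp.smul_apply, tailVector_apply, smul_eq_mul]
    by_cases hj : (j : ℕ) < n
    · rw [dif_pos hj, hprod (fun k => k < j) 0 j hj.le (fun k _ => by omega),
        defect_zeroExtend a hj, if_pos (Nat.zero_le _)]
      ring
    · rw [dif_neg hj, show ∏ k : Fin n, -conj (a k) = ∏ k : Fin n, -conj (zeroExtend a k) by simp,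
        Fin.prod_univ_eq_prod_range (fun k => -conj (zeroExtend a k))]
      simp [hn j hj]

end BlaschkeDilation

/-- The matrix `U^λ` is unitary whenever all `|a_j| < 1` and `|λ| = 1`. -/
theorem Ulam_unitary (n : ℕ) (a : Fin n → ℂ) (ha : ∀ j, ‖a j‖ < 1)
    (lam : ℂ) (hlam : ‖lam‖ = 1) :
    Ulam a lam ∈ Matrix.unitaryGroup (Fin (n + 1)) ℂ := by
  have hrows : (fun i => WithLp.toLp 2 (Ulam a lam i)) =
      BlaschkeDilation.dilationRow (BlaschkeDilation.zeroExtend a) lam n :=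
    funext fun i => PiLp.ext fun j => BlaschkeDilation.Ulam_apply a lam i j
  apply Matrix.mem_unitaryGroup_of_orthonormal_rows
  rw [hrows]
  exact BlaschkeDilation.orthonormal_dilationRow
    (BlaschkeDilation.norm_zeroExtend_le a zero_le_one fun j => (ha j).le)
    (BlaschkeDilation.zeroExtend_self a) hlam
end

section
/- Let a₁, …, aₙ ∈ ℂ with |a_j| < 1 for all j, let λ ∈ ℂ with |λ| = 1, and let U^λ be the (n+1)×(n+1) unitary matrix defined by: U^λ_{ii} = a_i for 1 ≤ i ≤ n; U^λ_{ij} = (∏_{k=i+1}^{j−1} (−ā_k))·√(1−|a_i|²)·√(1−|a_j|²) for 1 ≤ i < j ≤ n; U^λ_{ij} = 0 for 1 ≤ j < i ≤ n; U^λ_{n+1,j} = λ·(∏_{k=1}^{j−1} (−ā_k))·√(1−|a_j|²) for 1 ≤ j ≤ n; U^λ_{i,n+1} = (∏_{k=i+1}^{n} (−ā_k))·√(1−|a_i|²) for 1 ≤ i ≤ n; U^λ_{n+1,n+1} = λ·∏_{k=1}^{n} (−ā_k). Then the set of eigenvalues of U^λ equals { μ ∈ ℂ : μ·∏_{j=1}^{n}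 (μ − a_j) = λ·∏_{j=1}^{n} (1 − ā_j μ) }; this set has exactly n+1 elements, and every element has modulus 1. -/
open Finset Polynomial Matrix ComplexConjugate

theorem Polynomial.eval_derivative_finset_prod {ι K : Type*} [Field K] (s : Finset ι)
    (f : ι → K[X]) {x : K} (hx : ∀ i ∈ s, (f i).eval x ≠ 0) :
    (derivative (∏ i ∈ s, f i)).eval x =
      (∏ i ∈ s, (f i).eval x) * ∑ i ∈ s, (derivative (f i)).eval x / (f i).eval x := by
  classical
  rw [derivative_prod_finset, eval_finsetSum, mul_sum]
  refine sum_congr rfl fun i hi => ?_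
  rw [eval_mul, eval_prod, ← prod_erase_mul s _ hi]
  field_simp [hx i hi]

theorem Polynomial.nodup_roots_of_eval_derivative_ne_zero {R : Type*} [CommRing R] [IsDomain R]
    {p : R[X]} (hp : p ≠ 0) (h : ∀ x, p.IsRoot x → (derivative p).eval x ≠ 0) :
    p.roots.Nodup := by
  classical
  refine Multiset.nodup_iff_count_le_one.2 fun x => ?_
  rw [count_roots]
  by_contra! hx
  obtain ⟨hroot, hderiv⟩ := (one_lt_rootMultiplicity_iff_isRoot hp).1 hx
  exact h x hroot hderiv

theorem Matrix.mem_spectrum_of_mulVec_eq_smul {ι R : Type*} [Fintype ι] [DecidableEq ι]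
    [CommRing R] {A : Matrix ι ι R} {μ : R} {v : ι → R} (hv : v ≠ 0) (h : A *ᵥ v = μ • v) :
    μ ∈ spectrum R A := by
  rw [← spectrum_toLin']
  exact (Module.End.hasEigenvalue_of_hasEigenvector
    ⟨Module.End.mem_eigenspace_iff.2 (by rwa [toLin'_apply]), hv⟩).mem_spectrum

namespace Complex

theorem norm_one_sub_conj_mul_sq_sub_norm_sub_sq (μ c : ℂ) :
    ‖1 - conj c * μ‖ ^ 2 - ‖μ - c‖ ^ 2 = (1 - ‖μ‖ ^ 2) * (1 - ‖c‖ ^ 2) := by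
  simp only [← normSq_eq_norm_sq, normSq_apply, sub_re, sub_im, mul_re, mul_im, one_re, one_im,
    conj_re, conj_im]
  ring

theorem norm_sub_le_norm_one_sub_conj_mul {μ c : ℂ} (hc : ‖c‖ ≤ 1) (hμ : ‖μ‖ ≤ 1) :
    ‖μ - c‖ ≤ ‖1 - conj c * μ‖ := by
  rw [← sq_le_sq₀ (norm_nonneg _) (norm_nonneg _), ← sub_nonneg,
    norm_one_sub_conj_mul_sq_sub_norm_sub_sq]
  exact mul_nonneg (sub_nonneg.2 (pow_le_one₀ (norm_nonneg _) hμ))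
    (sub_nonneg.2 (pow_le_one₀ (norm_nonneg _) hc))

theorem norm_one_sub_conj_mul_le_norm_sub {μ c : ℂ} (hc : ‖c‖ ≤ 1) (hμ : 1 ≤ ‖μ‖) :
    ‖1 - conj c * μ‖ ≤ ‖μ - c‖ := by
  rw [← sq_le_sq₀ (norm_nonneg _) (norm_nonneg _), ← sub_nonpos,
    norm_one_sub_conj_mul_sq_sub_norm_sub_sq]
  exact mul_nonpos_of_nonpos_of_nonneg (sub_nonpos.2 (one_le_pow₀ hμ))
    (sub_nonneg.2 (pow_le_one₀ (norm_nonneg _) hc))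

theorem one_sub_conj_mul_ne_zero {μ c : ℂ} (hc : ‖c‖ < 1) (hμ : ‖μ‖ ≤ 1) :
    1 - conj c * μ ≠ 0 := by
  intro h
  have := congrArg norm (sub_eq_zero.1 h)
  rw [norm_one, norm_mul, norm_conj] at this
  nlinarith [norm_nonneg c]

theorem sub_ne_zero_of_norm_lt_of_norm_eq_one {μ c : ℂ} (hc : ‖c‖ < 1) (hμ : ‖μ‖ = 1) :
    μ - c ≠ 0 :=
  sub_ne_zero.2 fun h => by rw [h] at hμ; linarith

/-- On the unit circle, `z` times the logarithmic derivative of the Blaschke factor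
`(z - c) / (1 - c̄ z)` is the Poisson kernel. -/
theorem div_sub_add_conj_mul_div_one_sub {μ c : ℂ} (hc : ‖c‖ < 1) (hμ : ‖μ‖ = 1) :
    μ / (μ - c) + conj c * μ / (1 - conj c * μ) = ((1 - ‖c‖ ^ 2) / ‖μ - c‖ ^ 2 : ℝ) := by
  have h1 := sub_ne_zero_of_norm_lt_of_norm_eq_one hc hμ
  have h2 := one_sub_conj_mul_ne_zero hc hμ.le
  have h3 : conj (μ - c) ≠ 0 := (_root_.map_ne_zero _).2 h1
  have hμμ : μ * conj μ = 1 := by rw [mul_conj, normSq_eq_norm_sq, hμ]; norm_num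
  rw [← normSq_eq_norm_sq, ← normSq_eq_norm_sq, ofReal_div, ofReal_sub, ofReal_one, ← mul_conj,
    ← mul_conj]
  rw [map_sub] at h3 ⊢
  rw [div_add_div _ _ h1 h2, div_eq_div_iff (mul_ne_zero h1 h2) (mul_ne_zero h1 h3)]
  linear_combination (1 - c * conj c) * (μ - c) * hμμ

end Complex

section BlaschkeEquation

variable {ι : Type*} [Fintype ι]

theorem norm_eq_one_of_mul_prod_eq {a : ι → ℂ} (ha : ∀ j, ‖a j‖ < 1) {lam : ℂ}
    (hlam : ‖lam‖ = 1) {μ : ℂ} (h : μ * ∏ j, (μ - a j) = lam * ∏ j, (1 - conj (a j) * μ)) :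
    ‖μ‖ = 1 := by
  have hnorm : ‖μ‖ * ∏ j, ‖μ - a j‖ = ∏ j, ‖1 - conj (a j) * μ‖ := by
    simpa [norm_prod, hlam] using congrArg norm h
  rcases lt_trichotomy ‖μ‖ 1 with hlt | heq | hgt
  · have hle : ∏ j, ‖μ - a j‖ ≤ ∏ j, ‖1 - conj (a j) * μ‖ :=
      prod_le_prod (fun _ _ => norm_nonneg _) fun j _ =>
        Complex.norm_sub_le_norm_one_sub_conj_mul (ha j).le hlt.le
    have hpos : 0 < ∏ j, ‖1 - conj (a j) * μ‖ :=
      prod_pos fun j _ => norm_pos_iff.2 (Complex.one_sub_conj_mul_ne_zero (ha j) hlt.le)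
    nlinarith [norm_nonneg μ]
  · exact heq
  · have hle : ∏ j, ‖1 - conj (a j) * μ‖ ≤ ∏ j, ‖μ - a j‖ :=
      prod_le_prod (fun _ _ => norm_nonneg _) fun j _ =>
        Complex.norm_one_sub_conj_mul_le_norm_sub (ha j).le hgt.le
    have hpos : 0 < ∏ j, ‖μ - a j‖ :=
      prod_pos fun j _ => norm_pos_iff.2 (sub_ne_zero.2 fun h => by
        rw [h] at hgt; linarith [ha j])
    nlinarith

noncomputable def blaschkePoly (a : ι → ℂ) (lam : ℂ) : ℂ[X] :=
  X * ∏ j, (X - C (a j)) - C lam * ∏ j, (1 - C (conj (a j)) * X)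

theorem eval_blaschkePoly (a : ι → ℂ) (lam μ : ℂ) :
    (blaschkePoly a lam).eval μ = μ * ∏ j, (μ - a j) - lam * ∏ j, (1 - conj (a j) * μ) := by
  simp [blaschkePoly, eval_prod]

theorem isRoot_blaschkePoly_iff {a : ι → ℂ} {lam μ : ℂ} :
    (blaschkePoly a lam).IsRoot μ ↔ μ * ∏ j, (μ - a j) = lam * ∏ j, (1 - conj (a j) * μ) := by
  rw [IsRoot.def, eval_blaschkePoly, sub_eq_zero]

theorem blaschkePoly_monic_and_natDegree (a : ι → ℂ) (lam : ℂ) :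
    (blaschkePoly a lam).Monic ∧ (blaschkePoly a lam).natDegree = Fintype.card ι + 1 := by
  have hQ : (∏ j, (X - C (a j))).Monic := monic_prod_of_monic _ _ fun j _ => monic_X_sub_C _
  have hXQ : (X * ∏ j, (X - C (a j))).natDegree = Fintype.card ι + 1 := by
    rw [monic_X.natDegree_mul hQ, natDegree_prod_of_monic _ _ fun j _ => monic_X_sub_C _]
    simp [add_comm]
  have hR : (C lam * ∏ j, (1 - C (conj (a j)) * X)).natDegree ≤ Fintype.card ι := by
    refine natDegree_C_mul_le _ _ |>.trans <| (natDegree_prod_le _ _).trans ?_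
    refine (sum_le_sum (g := fun _ => 1) fun j _ => ?_).trans (by simp)
    show (1 - C (conj (a j)) * X).natDegree ≤ 1
    compute_degree
  have hlt : (C lam * ∏ j, (1 - C (conj (a j)) * X)).natDegree <
      (X * ∏ j, (X - C (a j))).natDegree := by omega
  exact ⟨(monic_X.mul hQ).sub_of_left (degree_lt_degree hlt),
    (natDegree_sub_eq_left_of_natDegree_lt hlt).trans hXQ⟩

theorem mul_eval_derivative_blaschkePoly {a : ι → ℂ} {lam μ : ℂ}
    (hμ : (blaschkePoly a lam).IsRoot μ) (hsub : ∀ j, μ - a j ≠ 0)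
    (hone : ∀ j, 1 - conj (a j) * μ ≠ 0) :
    μ * (derivative (blaschkePoly a lam)).eval μ = μ * (∏ j, (μ - a j)) *
      (1 + ∑ j, (μ / (μ - a j) + conj (a j) * μ / (1 - conj (a j) * μ))) := by
  rw [isRoot_blaschkePoly_iff] at hμ
  have hF : ∀ j ∈ univ, (X - C (a j)).eval μ ≠ 0 := by simpa using hsub
  have hG : ∀ j ∈ univ, (1 - C (conj (a j)) * X).eval μ ≠ 0 := by simpa using hone
  rw [blaschkePoly, derivative_sub, derivative_mul, derivative_C_mul, eval_sub, eval_add,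
    eval_mul, eval_mul, eval_mul, eval_derivative_finset_prod _ _ hF,
    eval_derivative_finset_prod _ _ hG]
  simp only [eval_prod, eval_X, eval_C, eval_sub, eval_mul, eval_one, eval_neg,
    derivative_X, derivative_sub, derivative_one, derivative_C, derivative_mul, zero_mul,
    zero_add, mul_one, sub_zero, zero_sub]
  have hsum : ∑ j, (μ / (μ - a j) + conj (a j) * μ / (1 - conj (a j) * μ)) =
      μ * ∑ j, 1 / (μ - a j) - μ * ∑ j, -conj (a j) / (1 - conj (a j) * μ) := by
    simp only [mul_sum, ← sum_sub_distrib]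
    exact sum_congr rfl fun j _ => by ring
  rw [hsum]
  linear_combination (μ * ∑ j, -conj (a j) / (1 - conj (a j) * μ)) * hμ

theorem eval_derivative_blaschkePoly_ne_zero {a : ι → ℂ} (ha : ∀ j, ‖a j‖ < 1) {lam : ℂ}
    (hlam : ‖lam‖ = 1) {μ : ℂ} (hμ : (blaschkePoly a lam).IsRoot μ) :
    (derivative (blaschkePoly a lam)).eval μ ≠ 0 := by
  have hμ1 := norm_eq_one_of_mul_prod_eq ha hlam (isRoot_blaschkePoly_iff.1 hμ)
  have hsub j := Complex.sub_ne_zero_of_norm_lt_of_norm_eq_one (ha j) hμ1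
  have hderiv := mul_eval_derivative_blaschkePoly hμ hsub
    fun j => Complex.one_sub_conj_mul_ne_zero (ha j) hμ1.le
  have hpos : 1 + ∑ j, (μ / (μ - a j) + conj (a j) * μ / (1 - conj (a j) * μ)) ≠ 0 := by
    simp only [Complex.div_sub_add_conj_mul_div_one_sub (ha _) hμ1]
    exact_mod_cast (add_pos_of_pos_of_nonneg one_pos (sum_nonneg fun j _ => div_nonneg
      (sub_nonneg.2 (pow_le_one₀ (norm_nonneg _) (ha j).le)) (sq_nonneg _))).ne'
  have hμ0 : μ ≠ 0 := norm_ne_zero_iff.1 (by rw [hμ1]; exact one_ne_zero)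
  intro h0
  rw [h0, mul_zero] at hderiv
  exact mul_ne_zero (mul_ne_zero hμ0 (prod_ne_zero_iff.2 fun j _ => hsub j)) hpos hderiv.symm

theorem blaschkePoly_roots_nodup {a : ι → ℂ} (ha : ∀ j, ‖a j‖ < 1) {lam : ℂ}
    (hlam : ‖lam‖ = 1) : (blaschkePoly a lam).roots.Nodup :=
  nodup_roots_of_eval_derivative_ne_zero (blaschkePoly_monic_and_natDegree a lam).1.ne_zero
    fun _ hμ => eval_derivative_blaschkePoly_ne_zero ha hlam hμ

end BlaschkeEquation

noncomputable def defect (z : ℂ) : ℂ := (Real.sqrt (1 - ‖z‖ ^ 2) : ℝ)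

theorem defect_mul_self {z : ℂ} (hz : ‖z‖ ≤ 1) : defect z * defect z = 1 - conj z * z := by
  rw [defect, ← Complex.ofReal_mul,
    Real.mul_self_sqrt (sub_nonneg.2 (pow_le_one₀ (norm_nonneg _) hz)), mul_comm,
    Complex.mul_conj, Complex.normSq_eq_norm_sq]
  push_cast; ring

section Ulam

variable {n : ℕ} (a : Fin n → ℂ) (lam μ : ℂ)

theorem Ulam_castSucc_castSucc (i j : Fin n) :
    Ulam a lam i.castSucc j.castSucc =
      if i = j then a i
      else if i < j then (∏ k ∈ Ioo i j, -conj (a k)) * defect (a i) * defect (a j) else 0 := by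
  simp [Ulam, defect, Fin.val_inj, filter_lt_lt_eq_Ioo]

theorem Ulam_castSucc_last (i : Fin n) :
    Ulam a lam i.castSucc (Fin.last n) = (∏ k ∈ Ioi i, -conj (a k)) * defect (a i) := by
  simp [Ulam, defect, filter_lt_eq_Ioi]

theorem Ulam_last_castSucc (j : Fin n) :
    Ulam a lam (Fin.last n) j.castSucc = lam * ((∏ k ∈ Iio j, -conj (a k)) * defect (a j)) := by
  simp [Ulam, defect, filter_gt_eq_Iio, mul_assoc]

theorem Ulam_last_last : Ulam a lam (Fin.last n) (Fin.last n) = lam * ∏ k, -conj (a k) := by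
  simp [Ulam]

noncomputable def ulamEigenvector : Fin (n + 1) → ℂ :=
  Fin.snoc (fun j => defect (a j) * (∏ k ∈ Ioi j, (1 - conj (a k) * μ)) * ∏ k ∈ Iio j, (μ - a k))
    (∏ k, (μ - a k))

theorem ulamEigenvector_castSucc (j : Fin n) :
    ulamEigenvector a μ j.castSucc =
      defect (a j) * (∏ k ∈ Ioi j, (1 - conj (a k) * μ)) * ∏ k ∈ Iio j, (μ - a k) :=
  Fin.snoc_castSucc _ _ _

theorem ulamEigenvector_castSucc_of_isUpperSet {s : Finset (Fin n)}
    (hs : IsUpperSet (s : Set (Fin n))) {j : Fin n} (hj : j ∈ s) :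
    ulamEigenvector a μ j.castSucc = defect (a j) * (∏ k ∈ s with j < k, (1 - conj (a k) * μ)) *
      ((∏ k ∈ sᶜ, (μ - a k)) * ∏ k ∈ s with k < j, (μ - a k)) := by
  have hIoi : Ioi j = {k ∈ s | j < k} := by
    ext k
    simpa using fun hjk : j < k => hs hjk.le hj
  have hIio : Iio j = sᶜ ∪ {k ∈ s | k < j} := by
    ext k
    simp only [mem_Iio, mem_union, mem_compl, mem_filter]
    constructor
    · intro hkj; tauto
    · rintro (hk | ⟨-, hkj⟩)
      · exact lt_of_not_ge fun hjk => hk (hs hjk hj)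
      · exact hkj
  rw [ulamEigenvector_castSucc, hIoi, hIio,
    prod_union (disjoint_compl_left.mono_right (filter_subset _ _))]

theorem ulamEigenvector_last : ulamEigenvector a μ (Fin.last n) = ∏ k, (μ - a k) :=
  Fin.snoc_last _ _

/-- For `s = Ioi i` the left side is the part of row `i` of `U^λ v` right of the diagonal, divided
by `defect (a i)`; for `s = univ` it is the last entry of `U^λ v`, divided by `λ`. -/
theorem sum_mul_ulamEigenvector_of_isUpperSet (ha : ∀ j, ‖a j‖ ≤ 1) {s : Finset (Fin n)}
    (hs : IsUpperSet (s : Set (Fin n))) :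
    ∑ j ∈ s, (∏ k ∈ s with k < j, -conj (a k)) * defect (a j) * ulamEigenvector a μ j.castSucc +
        (∏ k ∈ s, -conj (a k)) * ulamEigenvector a μ (Fin.last n) =
      (∏ k ∈ sᶜ, (μ - a k)) * ∏ k ∈ s, (1 - conj (a k) * μ) := by
  have htel := prod_sub_ordered s (fun k => 1 - conj (a k) * μ)
    (fun k => defect (a k) * defect (a k))
  have hfactor : ∀ k, 1 - conj (a k) * μ - defect (a k) * defect (a k) =
      -conj (a k) * (μ - a k) := fun k => by rw [defect_mul_self (ha k)]; ring
  simp only [hfactor, prod_mul_distrib] at htel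
  rw [eq_sub_iff_add_eq] at htel
  rw [← htel, ulamEigenvector_last, ← prod_compl_mul_prod s, mul_add, mul_sum,
    sum_congr rfl fun j hj => by rw [ulamEigenvector_castSucc_of_isUpperSet a μ hs hj]]
  rw [add_comm]
  congr 1
  · ring
  · exact sum_congr rfl fun j _ => by ring

theorem Ulam_mulVec_ulamEigenvector_castSucc (ha : ∀ j, ‖a j‖ ≤ 1) (i : Fin n) :
    (Ulam a lam *ᵥ ulamEigenvector a μ) i.castSucc = μ * ulamEigenvector a μ i.castSucc := by
  have hrow : ∀ j, Ulam a lam i.castSucc j.castSucc * ulamEigenvector a μ j.castSucc =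
      (if i = j then a i * ulamEigenvector a μ i.castSucc else 0) +
        if i < j then
          defect (a i) *
            ((∏ k ∈ Ioo i j, -conj (a k)) * defect (a j) * ulamEigenvector a μ j.castSucc)
        else 0 := by
    intro j
    rw [Ulam_castSucc_castSucc]
    rcases lt_trichotomy i j with h | rfl | h
    · simp only [h.ne, h, ↓reduceIte, zero_add]
      ring
    · simp
    · simp [h.ne', h.not_gt]
  have htail := sum_mul_ulamEigenvector_of_isUpperSet a μ ha (s := Ioi i)
    (by simpa using isUpperSet_Ioi (a := i))
  have hIoo : ∀ j, {k ∈ Ioi i | k < j} = Ioo i j := fun j => by ext; simp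
  have hcompl : (Ioi i)ᶜ = Iic i := by ext; simp
  simp only [hIoo, hcompl, ← mul_prod_Iio_eq_prod_Iic] at htail
  rw [mulVec, dotProduct, Fin.sum_univ_castSucc]
  simp only [hrow, sum_add_distrib, sum_ite_eq, mem_univ, if_true, ← sum_filter,
    filter_lt_eq_Ioi, Ulam_castSucc_last, ← mul_sum]
  rw [ulamEigenvector_castSucc a μ i]
  linear_combination defect (a i) * htail

theorem Ulam_mulVec_ulamEigenvector_last (ha : ∀ j, ‖a j‖ ≤ 1) :
    (Ulam a lam *ᵥ ulamEigenvector a μ) (Fin.last n) = lam * ∏ j, (1 - conj (a j) * μ) := by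
  have htail := sum_mul_ulamEigenvector_of_isUpperSet a μ ha (s := univ)
    (by simpa using isUpperSet_univ)
  simp only [compl_univ, prod_empty, one_mul, filter_gt_eq_Iio] at htail
  rw [mulVec, dotProduct, Fin.sum_univ_castSucc]
  simp only [Ulam_last_castSucc, Ulam_last_last, mul_assoc lam, ← mul_sum]
  linear_combination lam * htail

theorem Ulam_mulVec_ulamEigenvector (ha : ∀ j, ‖a j‖ ≤ 1)
    (hμ : μ * ∏ j, (μ - a j) = lam * ∏ j, (1 - conj (a j) * μ)) :
    Ulam a lam *ᵥ ulamEigenvector a μ = μ • ulamEigenvector a μ := by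
  ext i
  induction i using Fin.lastCases with
  | last =>
    rw [Ulam_mulVec_ulamEigenvector_last a lam μ ha, Pi.smul_apply, smul_eq_mul,
      ulamEigenvector_last, hμ]
  | cast i => exact Ulam_mulVec_ulamEigenvector_castSucc a lam μ ha i

theorem ulamEigenvector_ne_zero (hμ : ∀ j, μ - a j ≠ 0) : ulamEigenvector a μ ≠ 0 := fun h => by
  have := congrFun h (Fin.last n)
  rw [ulamEigenvector_last, Pi.zero_apply, prod_eq_zero_iff] at this
  obtain ⟨j, -, hj⟩ := this
  exact hμ j hj

theorem Ulam_charpoly {a : Fin n → ℂ} (ha : ∀ j, ‖a j‖ < 1) {lam : ℂ} (hlam : ‖lam‖ = 1) :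
    (Ulam a lam).charpoly = blaschkePoly a lam := by
  obtain ⟨hmonic, hdeg⟩ := blaschkePoly_monic_and_natDegree a lam
  have hprod : ((blaschkePoly a lam).roots.map (X - C ·)).prod = blaschkePoly a lam :=
    prod_multiset_X_sub_C_of_monic_of_roots_card_eq hmonic IsAlgClosed.card_roots_eq_natDegree
  have hroots : (blaschkePoly a lam).roots ≤ (Ulam a lam).charpoly.roots := by
    refine (Multiset.le_iff_subset (blaschkePoly_roots_nodup ha hlam)).2 fun μ hμ => ?_
    rw [mem_roots hmonic.ne_zero, isRoot_blaschkePoly_iff] at hμ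
    have hμ1 := norm_eq_one_of_mul_prod_eq ha hlam hμ
    rw [mem_roots (charpoly_monic _).ne_zero, ← mem_spectrum_iff_isRoot_charpoly]
    exact mem_spectrum_of_mulVec_eq_smul
      (ulamEigenvector_ne_zero a μ fun j =>
        Complex.sub_ne_zero_of_norm_lt_of_norm_eq_one (ha j) hμ1)
      (Ulam_mulVec_ulamEigenvector a lam μ (fun j => (ha j).le) hμ)
  refine eq_of_monic_of_dvd_of_natDegree_le hmonic (charpoly_monic _) ?_ ?_
  · rw [← hprod]
    exact (Multiset.prod_X_sub_C_dvd_iff_le_roots (charpoly_monic _).ne_zero _).2 hroots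
  · simp [hdeg]

end Ulam

/-- The eigenvalues of `U^λ` are exactly the `n + 1` solutions `μ` (all of modulus one)
of `μ·∏ (μ - a_j) = λ·∏ (1 - ā_j μ)`, i.e. the points that `z·B(z)` maps to `λ`, where `B`
is the finite Blaschke product with zeros `a_1, …, a_n`. -/
theorem Ulam_eigenvalues (n : ℕ) (a : Fin n → ℂ) (ha : ∀ j, ‖a j‖ < 1)
    (lam : ℂ) (hlam : ‖lam‖ = 1) :
    spectrum ℂ (Ulam a lam) =
      {μ : ℂ | μ * ∏ j, (μ - a j) = lam * ∏ j, (1 - (starRingEnd ℂ) (a j) * μ)} ∧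
    {μ : ℂ | μ * ∏ j, (μ - a j) = lam * ∏ j, (1 - (starRingEnd ℂ) (a j) * μ)}.ncard = n + 1 ∧
    ∀ μ ∈ {μ : ℂ | μ * ∏ j, (μ - a j) = lam * ∏ j, (1 - (starRingEnd ℂ) (a j) * μ)},
      ‖μ‖ = 1 := by
  obtain ⟨hmonic, hdeg⟩ := blaschkePoly_monic_and_natDegree a lam
  have hroots : {μ : ℂ | μ * ∏ j, (μ - a j) = lam * ∏ j, (1 - conj (a j) * μ)} =
      (blaschkePoly a lam).roots.toFinset := by
    ext μ
    rw [Set.mem_ofPred_eq, Finset.mem_coe, Multiset.mem_toFinset, mem_roots hmonic.ne_zero,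
      isRoot_blaschkePoly_iff]
  refine ⟨?_, ?_, fun μ hμ => norm_eq_one_of_mul_prod_eq ha hlam hμ⟩
  · ext μ
    rw [mem_spectrum_iff_isRoot_charpoly, Ulam_charpoly ha hlam, isRoot_blaschkePoly_iff]
    rfl
  · rw [hroots, Set.ncard_coe_finset,
      Multiset.toFinset_card_of_nodup (blaschkePoly_roots_nodup ha hlam),
      IsAlgClosed.card_roots_eq_natDegree, hdeg, Fintype.card_fin]
end
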